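/- arXiv:quant-ph/0412031 — 6 statements merged into one kernel-verified Lean document; each statement's English description precedes it below -/
import Mathlib

section
/- Let H be a finite-dimensional complex inner product space, E an orthogonal projection on H, and C a Hermitian operator on H with CE = C. An operator D° with 0 ≤ D° ≤ E attains the supremum of Tr(CD) over all operators D with 0 ≤ D ≤ E if and only if there exists a Hermitian operator B° with B° ≥ 0 and B° ≥ C such that B°(E − D°) = 0 and (B° − C)D° = 0. Moreover, any such B° attains the infimum of Tr(BE) over all Hermitian operators B with B ≥ 0 and B ≥ C, the same two conditions are also necessary and sufficient for optimality of B° in this dual problem (given some admissible D°), and the optimal values coincide: sup{Tr(CD) : 0 ≤ D ≤ E} = inf{Tr(BE) : B ≥ 0, B ≥ C}. -/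
/-!
Both problems are semidefinite programs in duality: for admissible `D` and `B`,
`Tr (B E) - Tr (C D) = Tr (B (E - D)) + Tr ((B - C) D)`, and the trace of a product of two
positive semidefinite matrices is nonnegative, vanishing only when the product does. So
`Tr (C D) ≤ Tr (B E)`, with equality exactly under the two complementarity conditions.
A complementary pair always exists: take for `D` the spectral projection `P` of `C` onto its
positive eigenvalues and `B = C P`, the positive part of `C`; `P ≤ E` because `E C = C`.
All four claims then follow from comparing objective values with this pair.
-/

open Matrix
open scoped ComplexOrder MatrixOrder

namespace Matrix

theorem trace_conjTranspose_mul_self_mul_conjTranspose_mul_self {m n k R : Type*} [Fintype m]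
    [Fintype n] [Fintype k] [CommRing R] [StarRing R] (X : Matrix n m R) (Y : Matrix k m R) :
    (Xᴴ * X * (Yᴴ * Y)).trace = ((X * Yᴴ)ᴴ * (X * Yᴴ)).trace := by
  rw [conjTranspose_mul, conjTranspose_conjTranspose, ← Matrix.mul_assoc, trace_mul_comm,
    ← Matrix.mul_assoc, ← Matrix.mul_assoc, ← Matrix.mul_assoc]

section PosSemidef

variable {m 𝕜 : Type*} [Fintype m] [RCLike 𝕜] {A B : Matrix m m 𝕜}

theorem PosSemidef.trace_mul_nonneg (hA : A.PosSemidef) (hB : B.PosSemidef) :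
    0 ≤ (A * B).trace := by
  classical
  obtain ⟨X, rfl⟩ := CStarAlgebra.nonneg_iff_eq_star_mul_self.mp hA.nonneg
  obtain ⟨Y, rfl⟩ := CStarAlgebra.nonneg_iff_eq_star_mul_self.mp hB.nonneg
  rw [star_eq_conjTranspose, star_eq_conjTranspose,
    trace_conjTranspose_mul_self_mul_conjTranspose_mul_self]
  exact (posSemidef_conjTranspose_mul_self _).trace_nonneg

theorem PosSemidef.trace_mul_eq_zero_iff (hA : A.PosSemidef) (hB : B.PosSemidef) :
    (A * B).trace = 0 ↔ A * B = 0 := by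
  classical
  refine ⟨fun h => ?_, fun h => by rw [h, trace_zero]⟩
  obtain ⟨X, rfl⟩ := CStarAlgebra.nonneg_iff_eq_star_mul_self.mp hA.nonneg
  obtain ⟨Y, rfl⟩ := CStarAlgebra.nonneg_iff_eq_star_mul_self.mp hB.nonneg
  rw [star_eq_conjTranspose, star_eq_conjTranspose,
    trace_conjTranspose_mul_self_mul_conjTranspose_mul_self,
    trace_conjTranspose_mul_self_eq_zero_iff] at h
  rw [star_eq_conjTranspose, star_eq_conjTranspose, Matrix.mul_assoc, ← Matrix.mul_assoc X,
    h, Matrix.zero_mul, Matrix.mul_zero]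

end PosSemidef

section PosSpectralProj

variable {m 𝕜 : Type*} [Fintype m] [DecidableEq m] [RCLike 𝕜] {C E : Matrix m m 𝕜}

theorem IsHermitian.mul_cfc (hC : C.IsHermitian) (f : ℝ → ℝ) :
    C * cfc f C = cfc (fun x => x * f x) C := by
  nth_rw 1 [← cfc_id' ℝ C]
  exact (cfc_mul _ _ C continuousOn_id (C.finite_real_spectrum.continuousOn _)).symm

noncomputable def posSpectralProj (C : Matrix m m 𝕜) : Matrix m m 𝕜 :=
  cfc (fun x : ℝ => if 0 < x then (1 : ℝ) else 0) C

theorem isStarProjection_posSpectralProj (C : Matrix m m 𝕜) :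
    IsStarProjection C.posSpectralProj := by
  refine ⟨?_, cfc_predicate _ _⟩
  rw [IsIdempotentElem, posSpectralProj, ← cfc_mul _ _ C (C.finite_real_spectrum.continuousOn _)
    (C.finite_real_spectrum.continuousOn _)]
  congr 1 with x
  split_ifs <;> simp

theorem IsHermitian.posSpectralProj_eq_mul (hC : C.IsHermitian) :
    C.posSpectralProj = C * cfc (fun x : ℝ => if 0 < x then x⁻¹ else 0) C := by
  rw [hC.mul_cfc, posSpectralProj]
  congr 1 with x
  split_ifs with h
  · simp [h.ne']
  · simp

theorem IsHermitian.mul_posSpectralProj_nonneg (hC : C.IsHermitian) :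
    0 ≤ C * C.posSpectralProj := by
  rw [posSpectralProj, hC.mul_cfc]
  refine cfc_nonneg fun x _ => ?_
  split_ifs with h
  · simpa using h.le
  · simp

theorem IsHermitian.le_mul_posSpectralProj (hC : C.IsHermitian) :
    C ≤ C * C.posSpectralProj := by
  rw [posSpectralProj, hC.mul_cfc]
  nth_rw 1 [← cfc_id' ℝ C]
  refine cfc_mono (fun x _ => ?_) continuousOn_id (C.finite_real_spectrum.continuousOn _)
  split_ifs with h
  · simp
  · simp only [mul_zero]
    linarith

theorem IsHermitian.mul_posSpectralProj_of_mul_eq (hC : C.IsHermitian) (hEC : E * C = C) :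
    E * C.posSpectralProj = C.posSpectralProj := by
  rw [hC.posSpectralProj_eq_mul, ← Matrix.mul_assoc, hEC]

end PosSpectralProj

end Matrix

section Duality

variable {m 𝕜 : Type*} [Fintype m] [RCLike 𝕜] {E C D B D₀ B₀ P Q : Matrix m m 𝕜}

theorem trace_mul_sub_trace_mul_eq (E C D B : Matrix m m 𝕜) :
    (B * E).trace - (C * D).trace = (B * (E - D)).trace + ((B - C) * D).trace := by
  rw [Matrix.mul_sub, Matrix.sub_mul, trace_sub, trace_sub]
  ring

theorem trace_mul_le_trace_mul (hD : D.PosSemidef) (hED : (E - D).PosSemidef)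
    (hB : B.PosSemidef) (hBC : (B - C).PosSemidef) : (C * D).trace ≤ (B * E).trace := by
  rw [← sub_nonneg, trace_mul_sub_trace_mul_eq]
  exact add_nonneg (hB.trace_mul_nonneg hED) (hBC.trace_mul_nonneg hD)

theorem re_trace_mul_le_re_trace_mul (hD : D.PosSemidef) (hED : (E - D).PosSemidef)
    (hB : B.PosSemidef) (hBC : (B - C).PosSemidef) :
    RCLike.re (C * D).trace ≤ RCLike.re (B * E).trace :=
  (RCLike.le_iff_re_im.mp (trace_mul_le_trace_mul hD hED hB hBC)).1

theorem re_trace_mul_eq_re_trace_mul_iff (hD : D.PosSemidef) (hED : (E - D).PosSemidef)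
    (hB : B.PosSemidef) (hBC : (B - C).PosSemidef) :
    RCLike.re (C * D).trace = RCLike.re (B * E).trace ↔ B * (E - D) = 0 ∧ (B - C) * D = 0 := by
  have him := (RCLike.le_iff_re_im.mp (trace_mul_le_trace_mul hD hED hB hBC)).2
  rw [← hB.trace_mul_eq_zero_iff hED, ← hBC.trace_mul_eq_zero_iff hD,
    ← add_eq_zero_iff_of_nonneg (hB.trace_mul_nonneg hED) (hBC.trace_mul_nonneg hD),
    ← trace_mul_sub_trace_mul_eq, sub_eq_zero, eq_comm]
  exact ⟨fun hre => RCLike.ext hre him.symm, fun h => congrArg RCLike.re h⟩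

variable (E C) in
structure IsComplementaryPair (D B : Matrix m m 𝕜) : Prop where
  posSemidef_primal : D.PosSemidef
  posSemidef_sub_primal : (E - D).PosSemidef
  posSemidef_dual : B.PosSemidef
  posSemidef_dual_sub : (B - C).PosSemidef
  dual_mul_sub_primal : B * (E - D) = 0
  dual_sub_mul_primal : (B - C) * D = 0

namespace IsComplementaryPair

theorem re_trace_mul_eq (h : IsComplementaryPair E C D₀ B₀) :
    RCLike.re (C * D₀).trace = RCLike.re (B₀ * E).trace :=
  (re_trace_mul_eq_re_trace_mul_iff h.1 h.2 h.3 h.4).mpr ⟨h.5, h.6⟩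

theorem re_trace_mul_le (h : IsComplementaryPair E C D₀ B₀) (hD : D.PosSemidef)
    (hED : (E - D).PosSemidef) : RCLike.re (C * D).trace ≤ RCLike.re (C * D₀).trace :=
  h.re_trace_mul_eq ▸ re_trace_mul_le_re_trace_mul hD hED h.3 h.4

theorem re_trace_mul_ge (h : IsComplementaryPair E C D₀ B₀) (hB : B.PosSemidef)
    (hBC : (B - C).PosSemidef) : RCLike.re (B₀ * E).trace ≤ RCLike.re (B * E).trace :=
  h.re_trace_mul_eq ▸ re_trace_mul_le_re_trace_mul h.1 h.2 hB hBC

theorem of_forall_re_trace_mul_le (h : IsComplementaryPair E C P Q) (hD₀ : D₀.PosSemidef)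
    (hED₀ : (E - D₀).PosSemidef)
    (hopt : ∀ D : Matrix m m 𝕜, D.PosSemidef → (E - D).PosSemidef →
      RCLike.re (C * D).trace ≤ RCLike.re (C * D₀).trace) :
    IsComplementaryPair E C D₀ Q := by
  have hle := re_trace_mul_le_re_trace_mul hD₀ hED₀ h.3 h.4
  have hge := h.re_trace_mul_eq ▸ hopt P h.1 h.2
  obtain ⟨hs₁, hs₂⟩ :=
    (re_trace_mul_eq_re_trace_mul_iff hD₀ hED₀ h.3 h.4).mp (le_antisymm hle hge)
  exact ⟨hD₀, hED₀, h.3, h.4, hs₁, hs₂⟩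

theorem of_forall_re_trace_mul_ge (h : IsComplementaryPair E C P Q) (hB₀ : B₀.PosSemidef)
    (hB₀C : (B₀ - C).PosSemidef)
    (hopt : ∀ B : Matrix m m 𝕜, B.PosSemidef → (B - C).PosSemidef →
      RCLike.re (B₀ * E).trace ≤ RCLike.re (B * E).trace) :
    IsComplementaryPair E C P B₀ := by
  have hle := re_trace_mul_le_re_trace_mul h.1 h.2 hB₀ hB₀C
  have hge := h.re_trace_mul_eq.symm ▸ hopt Q h.3 h.4
  obtain ⟨hs₁, hs₂⟩ :=
    (re_trace_mul_eq_re_trace_mul_iff h.1 h.2 hB₀ hB₀C).mp (le_antisymm hle hge)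
  exact ⟨h.1, h.2, hB₀, hB₀C, hs₁, hs₂⟩

theorem isGreatest (h : IsComplementaryPair E C D₀ B₀) :
    IsGreatest {t : ℝ | ∃ D : Matrix m m 𝕜, D.PosSemidef ∧ (E - D).PosSemidef ∧
      t = RCLike.re (C * D).trace} (RCLike.re (C * D₀).trace) :=
  ⟨⟨D₀, h.1, h.2, rfl⟩, by rintro _ ⟨D, hD, hED, rfl⟩; exact h.re_trace_mul_le hD hED⟩

theorem isLeast (h : IsComplementaryPair E C D₀ B₀) :
    IsLeast {t : ℝ | ∃ B : Matrix m m 𝕜, B.PosSemidef ∧ (B - C).PosSemidef ∧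
      t = RCLike.re (B * E).trace} (RCLike.re (C * D₀).trace) := by
  refine ⟨⟨B₀, h.3, h.4, h.re_trace_mul_eq⟩, ?_⟩
  rintro _ ⟨B, hB, hBC, rfl⟩
  exact h.re_trace_mul_eq ▸ h.re_trace_mul_ge hB hBC

end IsComplementaryPair

theorem exists_isComplementaryPair [DecidableEq m] (hE : E.IsHermitian) (hEproj : E * E = E)
    (hC : C.IsHermitian) (hCE : C * E = C) :
    ∃ D B : Matrix m m 𝕜, IsComplementaryPair E C D B := by
  set P := C.posSpectralProj
  have hP : IsStarProjection P := C.isStarProjection_posSpectralProj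
  have hEC : E * C = C := by
    simpa only [conjTranspose_mul, hE.eq, hC.eq] using congrArg conjTranspose hCE
  have hEP : E * P = P := hC.mul_posSpectralProj_of_mul_eq hEC
  have hPE : P * E = P := by
    have hPherm : P.IsHermitian := hP.isSelfAdjoint
    simpa only [conjTranspose_mul, hE.eq, hPherm.eq] using congrArg conjTranspose hEP
  have hPP : P * P = P := hP.isIdempotentElem
  refine ⟨P, C * P, nonneg_iff_posSemidef.mp hP.nonneg,
    hP.le_of_mul_eq_right ⟨hEproj, hE⟩ hEP,
    nonneg_iff_posSemidef.mp hC.mul_posSpectralProj_nonneg, hC.le_mul_posSpectralProj, ?_, ?_⟩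
  · rw [Matrix.mul_sub, Matrix.mul_assoc C P E, hPE, Matrix.mul_assoc C P P, hPP, sub_self]
  · rw [Matrix.sub_mul, Matrix.mul_assoc C P P, hPP, sub_self]

end Duality

/-- **Theorem 2.1.1** (optimal detection criterion).  `H` is modelled as `Fin n → ℂ`,
operators as `n × n` complex matrices.  `E` is an orthogonal projection, `C` a Hermitian
operator with `C * E = C`.  An admissible `D₀` (i.e. `0 ≤ D₀ ≤ E`) maximizes
`Tr (C * D)` over admissible `D` iff there is `B₀ ≥ 0, C` with `B₀ * (E - D₀) = 0` and
`(B₀ - C) * D₀ = 0`; such a `B₀` solves the dual problem of minimizing `Tr (B * E)` over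
`B ≥ 0, C`, the same conditions (for some admissible `D₀`) characterize dual optimality,
and the optimal values coincide. -/
theorem optimal_detection_criterion {n : ℕ}
    (E C : Matrix (Fin n) (Fin n) ℂ)
    (hE : E.IsHermitian) (hEproj : E * E = E)
    (hC : C.IsHermitian) (hCE : C * E = C) :
    (∀ D₀ : Matrix (Fin n) (Fin n) ℂ, D₀.PosSemidef → (E - D₀).PosSemidef →
      ((∀ D : Matrix (Fin n) (Fin n) ℂ, D.PosSemidef → (E - D).PosSemidef →
          ((C * D).trace).re ≤ ((C * D₀).trace).re) ↔
        (∃ B₀ : Matrix (Fin n) (Fin n) ℂ, B₀.PosSemidef ∧ (B₀ - C).PosSemidef ∧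
          B₀ * (E - D₀) = 0 ∧ (B₀ - C) * D₀ = 0))) ∧
    (∀ D₀ B₀ : Matrix (Fin n) (Fin n) ℂ, D₀.PosSemidef → (E - D₀).PosSemidef →
      B₀.PosSemidef → (B₀ - C).PosSemidef →
      B₀ * (E - D₀) = 0 → (B₀ - C) * D₀ = 0 →
      ∀ B : Matrix (Fin n) (Fin n) ℂ, B.PosSemidef → (B - C).PosSemidef →
        ((B₀ * E).trace).re ≤ ((B * E).trace).re) ∧
    (∀ B₀ : Matrix (Fin n) (Fin n) ℂ, B₀.PosSemidef → (B₀ - C).PosSemidef →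
      ((∀ B : Matrix (Fin n) (Fin n) ℂ, B.PosSemidef → (B - C).PosSemidef →
          ((B₀ * E).trace).re ≤ ((B * E).trace).re) ↔
        (∃ D₀ : Matrix (Fin n) (Fin n) ℂ, D₀.PosSemidef ∧ (E - D₀).PosSemidef ∧
          B₀ * (E - D₀) = 0 ∧ (B₀ - C) * D₀ = 0))) ∧
    sSup {t : ℝ | ∃ D : Matrix (Fin n) (Fin n) ℂ,
        D.PosSemidef ∧ (E - D).PosSemidef ∧ t = ((C * D).trace).re} =
      sInf {t : ℝ | ∃ B : Matrix (Fin n) (Fin n) ℂ,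
        B.PosSemidef ∧ (B - C).PosSemidef ∧ t = ((B * E).trace).re} := by
  obtain ⟨P, Q, hPQ⟩ := exists_isComplementaryPair hE hEproj hC hCE
  refine ⟨fun D₀ hD₀ hED₀ => ⟨fun hopt => ?_, ?_⟩, ?_,
    fun B₀ hB₀ hB₀C => ⟨fun hopt => ?_, ?_⟩, ?_⟩
  · have h := hPQ.of_forall_re_trace_mul_le hD₀ hED₀ hopt
    exact ⟨Q, h.3, h.4, h.5, h.6⟩
  · rintro ⟨B₀, hB₀, hB₀C, hs₁, hs₂⟩ D hD hED
    exact IsComplementaryPair.re_trace_mul_le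
      ⟨hD₀, hED₀, hB₀, hB₀C, hs₁, hs₂⟩ hD hED
  · intro D₀ B₀ hD₀ hED₀ hB₀ hB₀C hs₁ hs₂ B hB hBC
    exact IsComplementaryPair.re_trace_mul_ge
      ⟨hD₀, hED₀, hB₀, hB₀C, hs₁, hs₂⟩ hB hBC
  · have h := hPQ.of_forall_re_trace_mul_ge hB₀ hB₀C hopt
    exact ⟨P, h.1, h.2, h.5, h.6⟩
  · rintro ⟨D₀, hD₀, hED₀, hs₁, hs₂⟩ B hB hBC
    exact IsComplementaryPair.re_trace_mul_ge
      ⟨hD₀, hED₀, hB₀, hB₀C, hs₁, hs₂⟩ hB hBC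
  · exact hPQ.isGreatest.csSup_eq.trans hPQ.isLeast.csInf_eq.symm
end

section
/- Let H be a finite-dimensional complex inner product space, C a Hermitian operator on H with spectral decomposition C = Σ_n κ_n|χ_n⟩⟨χ_n|, and E an orthogonal projection with CE = C. Then sup{Tr(CD) : 0 ≤ D ≤ E} = Tr(C₊) = Σ_{κ_n>0} κ_n, where C₊ = Σ_{κ_n>0} κ_n|χ_n⟩⟨χ_n| is the positive part of C; the supremum is attained at D° = E₊, the orthogonal projection onto the span of the eigenvectors of C with positive eigenvalues, and the dual infimum inf{Tr(BE) : B ≥ 0, B ≥ C} is attained at B° = C₊. -/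
open Matrix
open scoped ComplexOrder

noncomputable section

/-- The positive part `C₊ = ∑_{κ i > 0} κ i |χ i⟩⟨χ i|` of a Hermitian operator with
spectral data `(χ, κ)`. -/
noncomputable def posPartM {n : ℕ} (χ : Fin n → (Fin n → ℂ)) (κ : Fin n → ℝ) :
    Matrix (Fin n) (Fin n) ℂ :=
  ∑ i ∈ Finset.univ.filter (fun i => 0 < κ i),
    (κ i : ℂ) • Matrix.vecMulVec (χ i) (star (χ i))

/-- The orthogonal projection `E₊ = ∑_{κ i > 0} |χ i⟩⟨χ i|` onto the span of the
eigenvectors with positive eigenvalues. -/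
noncomputable def posProjM {n : ℕ} (χ : Fin n → (Fin n → ℂ)) (κ : Fin n → ℝ) :
    Matrix (Fin n) (Fin n) ℂ :=
  ∑ i ∈ Finset.univ.filter (fun i => 0 < κ i), Matrix.vecMulVec (χ i) (star (χ i))

/-!
For `0 ≤ D ≤ E` and `B ≥ 0`, `B ≥ C` we have `Tr(CD) ≤ Tr(BD) ≤ Tr(BE)`, because the
trace of a product of two positive semidefinite matrices is nonnegative. The spectral
projection `E₊` is feasible for the maximisation and `C₊` for the minimisation, and both give
the value `Tr C₊`: `C E₊ = C₊`, and `C₊ E = C₊` because `C E = C` puts every eigenvector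
of `C` with nonzero eigenvalue into the range of `E`; so neither value can be improved.
-/

open scoped MatrixOrder

section TraceDuality

variable {m 𝕜 : Type*} [Fintype m] [DecidableEq m] [RCLike 𝕜]

theorem Matrix.PosSemidef.trace_mul_nonneg_s1 {A B : Matrix m m 𝕜} (hA : A.PosSemidef)
    (hB : B.PosSemidef) : 0 ≤ (A * B).trace := by
  obtain ⟨X, rfl⟩ : ∃ X : Matrix m m 𝕜, A = Xᴴ * X :=
    ⟨CFC.sqrt A, by rw [← star_eq_conjTranspose, (CFC.sqrt_nonneg A).isSelfAdjoint.star_eq,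
      CFC.sqrt_mul_sqrt_self A hA.nonneg]⟩
  rw [← trace_mul_cycle]
  exact (hB.mul_mul_conjTranspose_same X).trace_nonneg

theorem Matrix.trace_mul_le_trace_mul_of_posSemidef {B C D E : Matrix m m 𝕜}
    (hD : D.PosSemidef) (hED : (E - D).PosSemidef) (hB : B.PosSemidef)
    (hBC : (B - C).PosSemidef) : (C * D).trace ≤ (B * E).trace := by
  have hCD : (C * D).trace ≤ (B * D).trace := by
    simpa only [sub_mul, trace_sub, sub_nonneg] using hBC.trace_mul_nonneg_s1 hD
  have hDE : (B * D).trace ≤ (B * E).trace := by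
    simpa only [mul_sub, trace_sub, sub_nonneg] using hB.trace_mul_nonneg_s1 hED
  exact hCD.trans hDE

end TraceDuality

section Certificates

variable {m : Type*} [Fintype m] [DecidableEq m] {B₀ C E P : Matrix m m ℂ}

theorem isGreatest_re_trace_mul_of_eq (hP : P.PosSemidef) (hEP : (E - P).PosSemidef)
    (hB₀ : B₀.PosSemidef) (hB₀C : (B₀ - C).PosSemidef)
    (hval : (C * P).trace = (B₀ * E).trace) :
    IsGreatest {t : ℝ | ∃ D : Matrix m m ℂ,
        D.PosSemidef ∧ (E - D).PosSemidef ∧ t = ((C * D).trace).re} ((C * P).trace.re) := by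
  refine ⟨⟨P, hP, hEP, rfl⟩, ?_⟩
  rintro t ⟨D, hD, hED, rfl⟩
  rw [hval]
  exact (Complex.le_def.mp (trace_mul_le_trace_mul_of_posSemidef hD hED hB₀ hB₀C)).1

theorem isLeast_re_trace_mul_of_eq (hP : P.PosSemidef) (hEP : (E - P).PosSemidef)
    (hB₀ : B₀.PosSemidef) (hB₀C : (B₀ - C).PosSemidef)
    (hval : (C * P).trace = (B₀ * E).trace) :
    IsLeast {t : ℝ | ∃ B : Matrix m m ℂ,
        B.PosSemidef ∧ (B - C).PosSemidef ∧ t = ((B * E).trace).re} ((B₀ * E).trace.re) := by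
  refine ⟨⟨B₀, hB₀, hB₀C, rfl⟩, ?_⟩
  rintro t ⟨B, hB, hBC, rfl⟩
  rw [← hval]
  exact (Complex.le_def.mp (trace_mul_le_trace_mul_of_posSemidef hP hEP hB hBC)).1

end Certificates

section Orthonormal

variable {ι m 𝕜 : Type*} [DecidableEq ι] [Fintype m] [RCLike 𝕜] {χ : ι → m → 𝕜}

theorem vecMulVec_star_mul_vecMulVec_star
    (hON : ∀ i j, star (χ i) ⬝ᵥ χ j = if i = j then 1 else 0) (i j : ι) :
    vecMulVec (χ i) (star (χ i)) * vecMulVec (χ j) (star (χ j)) =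
      if i = j then vecMulVec (χ i) (star (χ i)) else 0 := by
  rw [vecMulVec_mul_vecMulVec, hON]
  split_ifs with h
  · subst h; rw [one_smul]
  · rw [zero_smul, vecMulVec_zero]

variable [Fintype ι] {C : Matrix m m 𝕜} {c : ι → 𝕜}

theorem mul_vecMulVec_star_of_eq_sum
    (hON : ∀ i j, star (χ i) ⬝ᵥ χ j = if i = j then 1 else 0)
    (hC : C = ∑ i, c i • vecMulVec (χ i) (star (χ i))) (j : ι) :
    C * vecMulVec (χ j) (star (χ j)) = c j • vecMulVec (χ j) (star (χ j)) := by
  simp only [hC, Finset.sum_mul, smul_mul_assoc, vecMulVec_star_mul_vecMulVec_star hON,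
    smul_ite, smul_zero, Finset.sum_ite_eq', Finset.mem_univ, if_true]

theorem vecMulVec_star_mul_of_eq_sum
    (hON : ∀ i j, star (χ i) ⬝ᵥ χ j = if i = j then 1 else 0)
    (hC : C = ∑ i, c i • vecMulVec (χ i) (star (χ i))) (j : ι) :
    vecMulVec (χ j) (star (χ j)) * C = c j • vecMulVec (χ j) (star (χ j)) := by
  simp only [hC, Finset.mul_sum, mul_smul_comm, vecMulVec_star_mul_vecMulVec_star hON,
    smul_ite, smul_zero, Finset.sum_ite_eq, Finset.mem_univ, if_true]

theorem vecMulVec_star_mul_eq_self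
    (hON : ∀ i j, star (χ i) ⬝ᵥ χ j = if i = j then 1 else 0)
    (hC : C = ∑ i, c i • vecMulVec (χ i) (star (χ i))) {E : Matrix m m 𝕜} (hCE : C * E = C)
    {j : ι} (hj : c j ≠ 0) :
    vecMulVec (χ j) (star (χ j)) * E = vecMulVec (χ j) (star (χ j)) := by
  have h := congrArg (vecMulVec (χ j) (star (χ j)) * ·) hCE
  simp only [← Matrix.mul_assoc, vecMulVec_star_mul_of_eq_sum hON hC, smul_mul_assoc] at h
  exact smul_right_injective _ hj h

end Orthonormal

section SpectralProjection

variable {n : ℕ}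

theorem posSemidef_posProjM (χ : Fin n → Fin n → ℂ) (κ : Fin n → ℝ) :
    (posProjM χ κ).PosSemidef :=
  posSemidef_sum _ fun i _ => posSemidef_vecMulVec_self_star (χ i)

theorem posSemidef_posPartM (χ : Fin n → Fin n → ℂ) (κ : Fin n → ℝ) :
    (posPartM χ κ).PosSemidef :=
  posSemidef_sum _ fun i hi =>
    (posSemidef_vecMulVec_self_star (χ i)).smul
      (Complex.zero_le_real.mpr (Finset.mem_filter.mp hi).2.le)

variable {χ : Fin n → Fin n → ℂ} {κ : Fin n → ℝ} {C : Matrix (Fin n) (Fin n) ℂ}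

theorem posSemidef_posPartM_sub
    (hC : C = ∑ i, (κ i : ℂ) • vecMulVec (χ i) (star (χ i))) :
    (posPartM χ κ - C).PosSemidef := by
  have hsplit : posPartM χ κ - C =
      ∑ i ∈ Finset.univ.filter (fun i => ¬ 0 < κ i),
        ((-κ i : ℝ) : ℂ) • vecMulVec (χ i) (star (χ i)) := by
    rw [hC, posPartM, ← Finset.sum_filter_add_sum_filter_not Finset.univ (fun i => 0 < κ i)]
    push_cast [neg_smul]
    rw [Finset.sum_neg_distrib]
    abel
  rw [hsplit]
  exact posSemidef_sum _ fun i hi => (posSemidef_vecMulVec_self_star (χ i)).smul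
    (Complex.zero_le_real.mpr (neg_nonneg.mpr (not_lt.mp (Finset.mem_filter.mp hi).2)))

theorem trace_posPartM
    (hON : ∀ i j, star (χ i) ⬝ᵥ χ j = if i = j then 1 else 0) :
    (posPartM χ κ).trace = ∑ i ∈ Finset.univ.filter (fun i => 0 < κ i), (κ i : ℂ) := by
  refine (trace_sum _ _).trans (Finset.sum_congr rfl fun i _ => ?_)
  rw [trace_smul, trace_vecMulVec, dotProduct_comm, hON, if_pos rfl, smul_eq_mul, mul_one]

theorem isStarProjection_posProjM
    (hON : ∀ i j, star (χ i) ⬝ᵥ χ j = if i = j then 1 else 0) :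
    IsStarProjection (posProjM χ κ) where
  isIdempotentElem := by
    simp only [IsIdempotentElem, posProjM, Finset.sum_mul_sum,
      vecMulVec_star_mul_vecMulVec_star hON]
    exact Finset.sum_congr rfl fun i hi => by rw [Finset.sum_ite_eq, if_pos hi]
  isSelfAdjoint :=
    isSelfAdjoint_sum _ fun i _ => (posSemidef_vecMulVec_self_star (χ i)).isHermitian

theorem mul_posProjM
    (hON : ∀ i j, star (χ i) ⬝ᵥ χ j = if i = j then 1 else 0)
    (hC : C = ∑ i, (κ i : ℂ) • vecMulVec (χ i) (star (χ i))) :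
    C * posProjM χ κ = posPartM χ κ := by
  simp only [posProjM, posPartM, Finset.mul_sum, mul_vecMulVec_star_of_eq_sum hON hC]

theorem posProjM_mul_eq_self
    (hON : ∀ i j, star (χ i) ⬝ᵥ χ j = if i = j then 1 else 0)
    (hC : C = ∑ i, (κ i : ℂ) • vecMulVec (χ i) (star (χ i)))
    {E : Matrix (Fin n) (Fin n) ℂ}
    (hCE : C * E = C) : posProjM χ κ * E = posProjM χ κ := by
  rw [posProjM, Finset.sum_mul]
  exact Finset.sum_congr rfl fun j hj => vecMulVec_star_mul_eq_self hON hC hCE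
    (Complex.ofReal_ne_zero.mpr (Finset.mem_filter.mp hj).2.ne')

theorem posSemidef_sub_posProjM
    (hON : ∀ i j, star (χ i) ⬝ᵥ χ j = if i = j then 1 else 0)
    (hC : C = ∑ i, (κ i : ℂ) • vecMulVec (χ i) (star (χ i)))
    {E : Matrix (Fin n) (Fin n) ℂ}
    (hE : E.IsHermitian) (hEE : E * E = E) (hCE : C * E = C) :
    (E - posProjM χ κ).PosSemidef :=
  nonneg_iff_posSemidef.mp <| IsStarProjection.nonneg <|
    (isStarProjection_posProjM hON).sub_of_mul_eq_left ⟨hEE, hE⟩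
      (posProjM_mul_eq_self hON hC hCE)

end SpectralProjection

/-- Maximal degree of contrast of an optimal detector:
`sup {Tr (C D) : 0 ≤ D ≤ E} = Tr C₊ = ∑_{κ_n > 0} κ_n`, attained at `D° = E₊`, while the
dual infimum `inf {Tr (B E) : B ≥ 0, C}` is attained at `B° = C₊`. -/
theorem optimal_detection_value {n : ℕ}
    (E C : Matrix (Fin n) (Fin n) ℂ)
    (χ : Fin n → (Fin n → ℂ)) (κ : Fin n → ℝ)
    (hON : ∀ i j, star (χ i) ⬝ᵥ χ j = if i = j then 1 else 0)
    (hspec : C = ∑ i, (κ i : ℂ) • Matrix.vecMulVec (χ i) (star (χ i)))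
    (hE : E.IsHermitian) (hEproj : E * E = E) (hCE : C * E = C) :
    (posPartM χ κ).trace = ∑ i ∈ Finset.univ.filter (fun i => 0 < κ i), (κ i : ℂ) ∧
    (posProjM χ κ).PosSemidef ∧ (E - posProjM χ κ).PosSemidef ∧
    ((C * posProjM χ κ).trace).re = ((posPartM χ κ).trace).re ∧
    IsGreatest {t : ℝ | ∃ D : Matrix (Fin n) (Fin n) ℂ,
        D.PosSemidef ∧ (E - D).PosSemidef ∧ t = ((C * D).trace).re}
      (((posPartM χ κ).trace).re) ∧
    (posPartM χ κ).PosSemidef ∧ (posPartM χ κ - C).PosSemidef ∧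
    IsLeast {t : ℝ | ∃ B : Matrix (Fin n) (Fin n) ℂ,
        B.PosSemidef ∧ (B - C).PosSemidef ∧ t = ((B * E).trace).re}
      (((posPartM χ κ * E).trace).re) := by
  have hP := posSemidef_posProjM χ κ
  have hEP := posSemidef_sub_posProjM hON hspec hE hEproj hCE
  have hCp := posSemidef_posPartM χ κ
  have hCpC := posSemidef_posPartM_sub hspec
  have hCP := mul_posProjM hON hspec
  have hval : (C * posProjM χ κ).trace = (posPartM χ κ * E).trace := by
    rw [← hCP, Matrix.mul_assoc, posProjM_mul_eq_self hON hspec hCE]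
  refine ⟨trace_posPartM hON, hP, hEP, by rw [hCP], ?_, hCp, hCpC,
    isLeast_re_trace_mul_of_eq hP hEP hCp hCpC hval⟩
  rw [← hCP]
  exact isGreatest_re_trace_mul_of_eq hP hEP hCp hCpC hval
end
end

section
/- Let ψ₀ and ψ₁ be linearly independent vectors in a complex inner product space, set ν₀ = ‖ψ₀‖², ν₁ = ‖ψ₁‖², β = ⟨ψ₀, ψ₁⟩, and let C = |ψ₁⟩⟨ψ₁| − |ψ₀⟩⟨ψ₀| be the degree-of-contrast operator restricted to the two-dimensional subspace spanned by ψ₀ and ψ₁. Then the eigenvalues of C on this subspace are κ± = (ν₁ − ν₀)/2 ± √(((ν₁ + ν₀)/2)² − |β|²); they are real (since |β|² ≤ ν₀ν₁ by the Cauchy–Schwarz inequality), and they satisfy κ₊ ≥ 0 ≥ κ₋. -/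
/-!
On `span {ψ₀, ψ₁}` the operator `C` acts, in the coordinates of the basis `ψ₀, ψ₁`, by the matrix
`diag(-1, 1) · G`, where `G` is the Gram matrix of `ψ₀, ψ₁`. Hence its eigenvalues there are the
roots of `det (diag(-1, 1) · G - t) = |β|² - (t + ν₀)(ν₁ - t)`, which by the quadratic formula are
`κ±`. Cauchy–Schwarz makes the discriminant at least `((ν₁ - ν₀)/2)²`, so `κ₋ ≤ 0 ≤ κ₊`.
-/

open scoped ComplexConjugate

noncomputable section

/-- The degree-of-contrast operator `C = |ψ₁⟩⟨ψ₁| − |ψ₀⟩⟨ψ₀|` on a complex inner product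
space, acting by `χ ↦ ⟨ψ₁, χ⟩ψ₁ − ⟨ψ₀, χ⟩ψ₀`. -/
noncomputable def contrastOp {H : Type*} [NormedAddCommGroup H] [InnerProductSpace ℂ H]
    (ψ₀ ψ₁ : H) : H →L[ℂ] H :=
  (innerSL ℂ ψ₁).smulRight ψ₁ - (innerSL ℂ ψ₀).smulRight ψ₀

open Matrix InnerProductSpace

theorem exists_eigenvector_mem_span_iff_det_eq_zero {ι K M : Type*} [Fintype ι] [DecidableEq ι]
    [Field K] [AddCommGroup M] [Module K M] {b : ι → M} (hb : LinearIndependent K b)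
    (f : M → M) (A : Matrix ι ι K)
    (hA : ∀ v, f (Fintype.linearCombination K b v) = Fintype.linearCombination K b (A *ᵥ v))
    (t : K) :
    (∃ χ ∈ Submodule.span K (Set.range b), χ ≠ 0 ∧ f χ = t • χ) ↔ (A - t • 1).det = 0 := by
  have hinj := hb.fintypeLinearCombination_injective
  have eigen_iff : ∀ v, f (Fintype.linearCombination K b v) = t • Fintype.linearCombination K b v
      ↔ (A - t • 1) *ᵥ v = 0 := by
    intro v
    rw [hA, ← map_smul, hinj.eq_iff, sub_mulVec, smul_mulVec, one_mulVec, sub_eq_zero]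
  rw [← exists_mulVec_eq_zero_iff, ← Fintype.range_linearCombination]
  constructor
  · rintro ⟨_, ⟨v, rfl⟩, hχ, hfχ⟩
    exact ⟨v, fun hv => hχ (by simp [hv]), (eigen_iff v).1 hfχ⟩
  · rintro ⟨v, hv, hAv⟩
    exact ⟨_, ⟨v, rfl⟩, fun h => hv (hinj (by simpa using h)), (eigen_iff v).2 hAv⟩

section

variable {H : Type*} [NormedAddCommGroup H] [InnerProductSpace ℂ H]

theorem contrastOp_linearCombination (ψ₀ ψ₁ : H) (v : Fin 2 → ℂ) :
    contrastOp ψ₀ ψ₁ (Fintype.linearCombination ℂ ![ψ₀, ψ₁] v) =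
      Fintype.linearCombination ℂ ![ψ₀, ψ₁] ((diagonal ![-1, 1] * gram ℂ ![ψ₀, ψ₁]) *ᵥ v) := by
  simp only [contrastOp, Fintype.linearCombination_apply, Fin.sum_univ_two, _root_.sub_apply,
    ContinuousLinearMap.smulRight_apply, coe_innerSL_apply, inner_add_right, inner_smul_right,
    mulVec_fin_two, diagonal_mul, gram, of_apply, cons_val_zero, cons_val_one, cons_val_fin_one]
  module

theorem exists_contrastOp_eigenvector_iff {ψ₀ ψ₁ : H} (hLI : LinearIndependent ℂ ![ψ₀, ψ₁])
    (t : ℝ) :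
    (∃ χ ∈ Submodule.span ℂ ({ψ₀, ψ₁} : Set H), χ ≠ 0 ∧ contrastOp ψ₀ ψ₁ χ = (t : ℂ) • χ) ↔
      (t + ‖ψ₀‖ ^ 2) * (‖ψ₁‖ ^ 2 - t) = ‖⟪ψ₀, ψ₁⟫_ℂ‖ ^ 2 := by
  rw [← range_cons_cons_empty ψ₀ ψ₁ ![],
    exists_eigenvector_mem_span_iff_det_eq_zero hLI _ _ (contrastOp_linearCombination ψ₀ ψ₁),
    det_fin_two]
  simp only [Matrix.sub_apply, Matrix.smul_apply, diagonal_mul, gram, of_apply, cons_val_zero,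
    cons_val_one, cons_val_fin_one, one_apply_eq, one_apply_ne zero_ne_one,
    one_apply_ne one_ne_zero, inner_self_eq_norm_sq_to_K, smul_eq_mul, mul_one]
  rw [← inner_conj_symm ψ₁ ψ₀, ← Complex.ofReal_inj]
  push_cast
  rw [← Complex.mul_conj' ⟪ψ₀, ψ₁⟫_ℂ]
  constructor <;> intro h <;> linear_combination -h

end

theorem add_mul_sub_eq_iff_eq_add_sqrt_or_eq_sub_sqrt {ν₀ ν₁ b t : ℝ}
    (hD : 0 ≤ ((ν₁ + ν₀) / 2) ^ 2 - b) :
    (t + ν₀) * (ν₁ - t) = b ↔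
      t = (ν₁ - ν₀) / 2 + √(((ν₁ + ν₀) / 2) ^ 2 - b) ∨
        t = (ν₁ - ν₀) / 2 - √(((ν₁ + ν₀) / 2) ^ 2 - b) := by
  have hdiscrim : discrim 1 (-(ν₁ - ν₀)) (b - ν₀ * ν₁) =
      (2 * √(((ν₁ + ν₀) / 2) ^ 2 - b)) * (2 * √(((ν₁ + ν₀) / 2) ^ 2 - b)) := by
    rw [discrim, mul_mul_mul_comm, Real.mul_self_sqrt hD]
    ring
  have hquad : (t + ν₀) * (ν₁ - t) = b ↔ 1 * (t * t) + -(ν₁ - ν₀) * t + (b - ν₀ * ν₁) = 0 := by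
    constructor <;> intro h <;> linarith
  rw [hquad, quadratic_eq_zero_iff one_ne_zero hdiscrim t]
  ring_nf

theorem abs_sub_div_two_le_sqrt {ν₀ ν₁ b : ℝ} (h : b ≤ ν₀ * ν₁) :
    |(ν₁ - ν₀) / 2| ≤ √(((ν₁ + ν₀) / 2) ^ 2 - b) :=
  Real.abs_le_sqrt (by nlinarith)

/-- For linearly independent `ψ₀, ψ₁`, with `ν₀ = ‖ψ₀‖²`, `ν₁ = ‖ψ₁‖²`, `β = ⟨ψ₀, ψ₁⟩`,
the eigenvalues of `C = |ψ₁⟩⟨ψ₁| − |ψ₀⟩⟨ψ₀|` on `span {ψ₀, ψ₁}` are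
`κ± = (ν₁ − ν₀)/2 ± √(((ν₁ + ν₀)/2)² − |β|²)`; they are real (`|β|² ≤ ν₀ν₁` by
Cauchy–Schwarz) and satisfy `κ₊ ≥ 0 ≥ κ₋`. -/
theorem contrast_eigenvalues {H : Type*} [NormedAddCommGroup H] [InnerProductSpace ℂ H]
    (ψ₀ ψ₁ : H) (hLI : LinearIndependent ℂ ![ψ₀, ψ₁])
    (ν₀ ν₁ : ℝ) (hν₀ : ν₀ = ‖ψ₀‖ ^ 2) (hν₁ : ν₁ = ‖ψ₁‖ ^ 2)
    (β : ℂ) (hβ : β = inner ℂ ψ₀ ψ₁)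
    (κp κm : ℝ)
    (hκp : κp = (ν₁ - ν₀) / 2 + Real.sqrt (((ν₁ + ν₀) / 2) ^ 2 - ‖β‖ ^ 2))
    (hκm : κm = (ν₁ - ν₀) / 2 - Real.sqrt (((ν₁ + ν₀) / 2) ^ 2 - ‖β‖ ^ 2)) :
    ‖β‖ ^ 2 ≤ ν₀ * ν₁ ∧
    0 ≤ ((ν₁ + ν₀) / 2) ^ 2 - ‖β‖ ^ 2 ∧
    0 ≤ κp ∧ κm ≤ 0 ∧
    (∃ χ ∈ Submodule.span ℂ ({ψ₀, ψ₁} : Set H), χ ≠ 0 ∧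
      contrastOp ψ₀ ψ₁ χ = (κp : ℂ) • χ) ∧
    (∃ χ ∈ Submodule.span ℂ ({ψ₀, ψ₁} : Set H), χ ≠ 0 ∧
      contrastOp ψ₀ ψ₁ χ = (κm : ℂ) • χ) ∧
    (∀ (t : ℝ) (χ : H), χ ∈ Submodule.span ℂ ({ψ₀, ψ₁} : Set H) → χ ≠ 0 →
      contrastOp ψ₀ ψ₁ χ = (t : ℂ) • χ → t = κp ∨ t = κm) := by
  subst hν₀ hν₁ hβ hκp hκm
  have hCS : ‖⟪ψ₀, ψ₁⟫_ℂ‖ ^ 2 ≤ ‖ψ₀‖ ^ 2 * ‖ψ₁‖ ^ 2 := by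
    rw [← mul_pow]
    exact pow_le_pow_left₀ (norm_nonneg _) (norm_inner_le_norm ψ₀ ψ₁) 2
  have hD : 0 ≤ ((‖ψ₁‖ ^ 2 + ‖ψ₀‖ ^ 2) / 2) ^ 2 - ‖⟪ψ₀, ψ₁⟫_ℂ‖ ^ 2 := by
    nlinarith [sq_nonneg (‖ψ₁‖ ^ 2 - ‖ψ₀‖ ^ 2)]
  have hgap := abs_sub_div_two_le_sqrt hCS
  have hroots (t : ℝ) := add_mul_sub_eq_iff_eq_add_sqrt_or_eq_sub_sqrt (t := t) hD
  have heigen := exists_contrastOp_eigenvector_iff hLI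
  refine ⟨hCS, hD, by linarith [neg_abs_le ((‖ψ₁‖ ^ 2 - ‖ψ₀‖ ^ 2) / 2)],
    by linarith [le_abs_self ((‖ψ₁‖ ^ 2 - ‖ψ₀‖ ^ 2) / 2)],
    (heigen _).2 ((hroots _).2 (.inl rfl)), (heigen _).2 ((hroots _).2 (.inr rfl)), ?_⟩
  intro t χ hχ hχ0 hCχ
  exact (hroots t).1 ((heigen t).1 ⟨χ, hχ, hχ0, hCχ⟩)
end
end

section
/- Let K₁, …, K_m be finite-dimensional complex inner product spaces, K^m = ⊕_{i=1}^m K_i with diagonal projections 1_i : K^m → K_i, let σ = [σ_ik] be a positive semidefinite block operator on K^m with support projection ε, h = σ^{1/2}, h_i = 1_ih, and let ϵ(a) = Σ_{i=1}^m 1_i a 1_i denote the block-diagonal part of an operator a on K^m. Then a family δ₁°, …, δ_m° of positive semidefinite operators on εK^m with Σ_iδ_i° = ε satisfies the optimality conditions (λ° − σ_i)δ_i° = 0 and λ° ≥ σ_i := h_i*h_i for all i (for some operator λ°) if and only if δ_i° = (λ°)⁻¹hμ_i°h(λ°)⁻¹ for all i, where λ° = (hμ°h)^{1/2}, μ° =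 ⊕_{i=1}^m μ_i° is a block-diagonal positive semidefinite operator satisfying μ° = ϵ(h(λ°)⁻¹h)μ° and 1 ≥ ϵ(h(λ°)⁻¹h); when σ is nonsingular (ε = 1) the last conditions reduce to μ° = ϵ(√(σμ°)). The quality of optimal identification is then ϰ° = Tr(μ°). -/
open Matrix
open scoped ComplexOrder

namespace OptIdAux

variable {N : ℕ} {A : Matrix (Fin N) (Fin N) ℂ}

/-- spectral function calculus -/
noncomputable def mfun (hA : A.IsHermitian) (f : ℝ → ℝ) : Matrix (Fin N) (Fin N) ℂ :=
  hA.eigenvectorUnitary.1 * diagonal (Complex.ofReal ∘ f ∘ hA.eigenvalues) *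
    (star hA.eigenvectorUnitary.1)

lemma mfun_mul (hA : A.IsHermitian) (f g : ℝ → ℝ) :
    mfun hA f * mfun hA g = mfun hA (fun t => f t * g t) := by
  have hU : (star hA.eigenvectorUnitary.1) * hA.eigenvectorUnitary.1 = 1 := by
    simpa using congrArg Subtype.val (star_mul_self hA.eigenvectorUnitary)
  unfold mfun
  simp only [mul_assoc]
  rw [← mul_assoc (star hA.eigenvectorUnitary.1) hA.eigenvectorUnitary.1, hU, one_mul,
    ← mul_assoc (diagonal _) (diagonal _), diagonal_mul_diagonal]
  have : (fun i => (Complex.ofReal ∘ f ∘ hA.eigenvalues) i * (Complex.ofReal ∘ g ∘ hA.eigenvalues) i) =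
      Complex.ofReal ∘ (fun t => f t * g t) ∘ hA.eigenvalues :=
    funext fun i => (Complex.ofReal_mul _ _).symm
  rw [this]

lemma mfun_congr (hA : A.IsHermitian) {f g : ℝ → ℝ}
    (hfg : ∀ i, f (hA.eigenvalues i) = g (hA.eigenvalues i)) : mfun hA f = mfun hA g := by
  have hfg' : (Complex.ofReal ∘ f ∘ hA.eigenvalues) = Complex.ofReal ∘ g ∘ hA.eigenvalues :=
    funext fun i => congrArg _ (hfg i)
  unfold mfun
  rw [hfg']

lemma mfun_id (hA : A.IsHermitian) : mfun hA id = A := by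
  unfold mfun
  exact hA.spectral_theorem.symm

lemma mfun_isHermitian (hA : A.IsHermitian) (f : ℝ → ℝ) : (mfun hA f).IsHermitian := by
  unfold mfun
  rw [star_eq_conjTranspose]
  apply isHermitian_mul_mul_conjTranspose
  rw [Matrix.IsHermitian, diagonal_conjTranspose]
  have : star (Complex.ofReal ∘ f ∘ hA.eigenvalues) = Complex.ofReal ∘ f ∘ hA.eigenvalues :=
    funext fun i => by simp [Complex.conj_ofReal]
  rw [this]

lemma mfun_posSemidef (hA : A.IsHermitian) {f : ℝ → ℝ}
    (hf : ∀ i, 0 ≤ f (hA.eigenvalues i)) : (mfun hA f).PosSemidef := by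
  unfold mfun
  have hd : (diagonal (Complex.ofReal ∘ f ∘ hA.eigenvalues)).PosSemidef := by
    rw [posSemidef_diagonal_iff]
    intro i
    simpa using Complex.zero_le_real.mpr (hf i)
  rw [star_eq_conjTranspose]
  exact hd.mul_mul_conjTranspose_same hA.eigenvectorUnitary.1

end OptIdAux

namespace OptIdAux2

theorem rw2 {α : Type*} [Semigroup α] {a b c : α} (h : a * b = c) (d : α) :
    a * (b * d) = c * d := by rw [← mul_assoc, h]

theorem rw3 {α : Type*} [Semigroup α] {a b c r : α} (h : a * (b * c) = r) (d : α) :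
    a * (b * (c * d)) = r * d := by rw [← mul_assoc b c d]; exact rw2 h d

theorem rw4 {α : Type*} [Semigroup α] {a b c e r : α} (h : a * (b * (c * e)) = r) (d : α) :
    a * (b * (c * (e * d))) = r * d := by rw [← mul_assoc c e d]; exact rw3 h d

theorem rw5 {α : Type*} [Semigroup α] {a b c e f r : α} (h : a * (b * (c * (e * f))) = r) (d : α) :
    a * (b * (c * (e * (f * d)))) = r * d := by rw [← mul_assoc e f d]; exact rw4 h d

variable {n : ℕ}

theorem ext_mulVec {M M' : Matrix (Fin n) (Fin n) ℂ} (h : ∀ x, M *ᵥ x = M' *ᵥ x) : M = M' := by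
  ext i j
  have := congrFun (h (Pi.single j 1)) i
  simpa using this

theorem eq_zero_of_mulVec {M : Matrix (Fin n) (Fin n) ℂ} (h : ∀ x, M *ᵥ x = 0) : M = 0 :=
  ext_mulVec fun x => by rw [h x, zero_mulVec]

theorem dp_shift (M : Matrix (Fin n) (Fin n) ℂ) (u v : Fin n → ℂ) :
    star (M *ᵥ u) ⬝ᵥ v = star u ⬝ᵥ (Mᴴ *ᵥ v) := by
  rw [star_mulVec, ← dotProduct_mulVec]

theorem dp_factor {M C : Matrix (Fin n) (Fin n) ℂ} (hM : M = Cᴴ * C) (x : Fin n → ℂ) :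
    star x ⬝ᵥ M *ᵥ x = star (C *ᵥ x) ⬝ᵥ (C *ᵥ x) := by
  rw [dp_shift, mulVec_mulVec, hM]

/-- a PSD quadratic form is its own real part -/
theorem psd_q_re {M : Matrix (Fin n) (Fin n) ℂ} (hM : M.PosSemidef) (x : Fin n → ℂ) :
    star x ⬝ᵥ M *ᵥ x = (((star x ⬝ᵥ M *ᵥ x).re : ℝ) : ℂ) := by
  have h0 := hM.dotProduct_mulVec_nonneg x
  rw [Complex.le_def] at h0
  exact Complex.ext rfl (by simpa using h0.2.symm)

theorem psd_mono {X Y : Matrix (Fin n) (Fin n) ℂ} (hXY : (X - Y).PosSemidef) (x : Fin n → ℂ) :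
    (star x ⬝ᵥ Y *ᵥ x).re ≤ (star x ⬝ᵥ X *ᵥ x).re := by
  have h0 := hXY.dotProduct_mulVec_nonneg x
  rw [Complex.le_def] at h0
  have : star x ⬝ᵥ (X - Y) *ᵥ x = star x ⬝ᵥ X *ᵥ x - star x ⬝ᵥ Y *ᵥ x := by
    rw [sub_mulVec, dotProduct_sub]
  rw [this] at h0
  have := h0.1
  simp only [Complex.zero_re, Complex.sub_re] at this
  linarith

theorem cauchy_dp (w v : Fin n → ℂ) (c : ℝ) (hc : star w ⬝ᵥ v = (c : ℂ))
    (hw : (star w ⬝ᵥ w).re ≤ c) : c ≤ (star v ⬝ᵥ v).re := by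
  have key := inner_mul_inner_self_le (𝕜 := ℂ) (E := EuclideanSpace ℂ (Fin n))
    (WithLp.toLp 2 w) (WithLp.toLp 2 v)
  rw [EuclideanSpace.inner_toLp_toLp, EuclideanSpace.inner_toLp_toLp,
    EuclideanSpace.inner_toLp_toLp, EuclideanSpace.inner_toLp_toLp] at key
  rw [dotProduct_comm v (star w), dotProduct_comm w (star v), dotProduct_comm w (star w),
    dotProduct_comm v (star v)] at key
  have hvw : star v ⬝ᵥ w = (c : ℂ) := by
    rw [star_dotProduct, hc]; simp
  rw [hc, hvw] at key
  have hww : 0 ≤ (star w ⬝ᵥ w).re := by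
    simpa using (Complex.le_def.mp (dotProduct_star_self_nonneg w)).1
  have hvv : 0 ≤ (star v ⬝ᵥ v).re := by
    simpa using (Complex.le_def.mp (dotProduct_star_self_nonneg v)).1
  have hcnn : 0 ≤ c := le_trans hww hw
  simp only [Complex.norm_real, RCLike.re_to_complex] at key
  rw [Real.norm_eq_abs, abs_of_nonneg hcnn] at key
  nlinarith [key, hw, hcnn, hww, hvv]

theorem psd_sum {m : ℕ} (f : Fin m → Matrix (Fin n) (Fin n) ℂ)
    (hf : ∀ i, (f i).PosSemidef) (s : Finset (Fin m)) : (∑ i ∈ s, f i).PosSemidef := by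
  classical
  induction s using Finset.induction with
  | empty => simpa using Matrix.PosSemidef.zero
  | insert a s hne ih => rw [Finset.sum_insert hne]; exact (hf _).add ih

theorem psd_sum_zero {m : ℕ} (f : Fin m → Matrix (Fin n) (Fin n) ℂ)
    (hf : ∀ i, (f i).PosSemidef) (hsum : ∑ i, f i = 0) (i : Fin m) : f i = 0 := by
  classical
  apply eq_zero_of_mulVec
  intro x
  rw [← (hf i).dotProduct_mulVec_zero_iff]
  have hle : star x ⬝ᵥ (f i) *ᵥ x ≤ star x ⬝ᵥ (∑ j, f j) *ᵥ x := by
    have : ∑ j, f j - f i = ∑ j ∈ Finset.univ.erase i, f j := by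
      rw [eq_comm, Finset.sum_erase_eq_sub (Finset.mem_univ i)]
    have hps : (∑ j, f j - f i).PosSemidef := this ▸ psd_sum f hf _
    have := hps.dotProduct_mulVec_nonneg x
    rw [sub_mulVec, dotProduct_sub, sub_nonneg] at this
    exact this
  rw [hsum] at hle
  simp only [zero_mulVec, dotProduct_zero] at hle
  exact le_antisymm hle ((hf i).dotProduct_mulVec_nonneg x)

/-- from `σ * E = 0` and `h * h = σ` (h hermitian) conclude `h * E = 0` -/
theorem sq_zero {h σ E : Matrix (Fin n) (Fin n) ℂ} (hherm : h.IsHermitian)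
    (hh2 : h * h = σ) (hσE : σ * E = 0) : h * E = 0 := by
  have : (h * E)ᴴ * (h * E) = 0 := by
    rw [conjTranspose_mul, hherm.eq, mul_assoc, ← mul_assoc h h E, hh2, hσE, mul_zero]
  exact conjTranspose_mul_self_eq_zero.mp this

theorem rw6 {α : Type*} [Semigroup α] {a b c e f g r : α} (h : a * (b * (c * (e * (f * g)))) = r)
    (d : α) : a * (b * (c * (e * (f * (g * d))))) = r * d := by
  rw [← mul_assoc f g d]; exact rw5 h d
theorem dp_sandwich (M C : Matrix (Fin n) (Fin n) ℂ) (x : Fin n → ℂ) :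
    star x ⬝ᵥ (Cᴴ * M * C) *ᵥ x = star (C *ᵥ x) ⬝ᵥ M *ᵥ (C *ᵥ x) := by
  calc star x ⬝ᵥ (Cᴴ * M * C) *ᵥ x = star x ⬝ᵥ Cᴴ *ᵥ (M *ᵥ (C *ᵥ x)) := by
        rw [mulVec_mulVec, mulVec_mulVec]
    _ = star (C *ᵥ x) ⬝ᵥ M *ᵥ (C *ᵥ x) := (dp_shift C x _).symm
theorem dp_self_re (v : Fin n → ℂ) : star v ⬝ᵥ v = (((star v ⬝ᵥ v).re : ℝ) : ℂ) := by
  have hnn := dotProduct_star_self_nonneg v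
  rw [Complex.le_def] at hnn
  exact Complex.ext rfl (by simpa using hnn.2.symm)
theorem psd_annihilate {A E : Matrix (Fin n) (Fin n) ℂ} (hA : A.PosSemidef)
    (hE : Eᴴ * A * E = 0) : A * E = 0 := by
  obtain ⟨B, rfl⟩ : ∃ B : Matrix (Fin n) (Fin n) ℂ, A = Bᴴ * B := by
    open scoped MatrixOrder in
    exact CStarAlgebra.nonneg_iff_eq_star_mul_self.mp hA.nonneg
  have h1 : (B * E)ᴴ * (B * E) = 0 := by
    rw [conjTranspose_mul]
    calc Eᴴ * Bᴴ * (B * E) = Eᴴ * (Bᴴ * B) * E := by simp only [mul_assoc]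
      _ = 0 := hE
  have hBE : B * E = 0 := conjTranspose_mul_self_eq_zero.mp h1
  rw [mul_assoc, hBE, mul_zero]
theorem sum_mulVec' {m n : ℕ} (f : Fin m → Matrix (Fin n) (Fin n) ℂ) (v : Fin n → ℂ) :
    (∑ i, f i) *ᵥ v = ∑ i, f i *ᵥ v := by
  ext j
  simp only [mulVec, dotProduct, Matrix.sum_apply, Finset.sum_apply, Finset.sum_mul]
  rw [Finset.sum_comm]
open scoped MatrixOrder in
theorem psd_eq_of_sq {A B : Matrix (Fin n) (Fin n) ℂ} (hA : A.PosSemidef) (hB : B.PosSemidef)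
    (h : A ^ 2 = B ^ 2) : A = B :=
  (CFC.sq_eq_sq_iff A B hA.nonneg hB.nonneg).mp h
end OptIdAux2

open OptIdAux OptIdAux2

theorem ctx_lemma {N m : ℕ} (P : Fin m → Matrix (Fin N) (Fin N) ℂ)
    (hPh : ∀ i, (P i).IsHermitian) (hPi : ∀ i, P i * P i = P i)
    (hPo : ∀ i j, i ≠ j → P i * P j = 0)
    (h ε : Matrix (Fin N) (Fin N) ℂ) (hh : h.PosSemidef) (hε : ε.IsHermitian)
    (hhε : h * ε = h) (hεh : ε * h = h)
    (δ : Fin m → Matrix (Fin N) (Fin N) ℂ)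
    (μ lam lamInv : Matrix (Fin N) (Fin N) ℂ)
    (hμP : μ.PosSemidef) (hμblk : (∑ i, P i * μ * P i) = μ)
    (hlamP : lam.PosSemidef) (hlam2 : lam * lam = h * μ * h)
    (hIL : lamInv * lam = ε) (hLI : lam * lamInv = ε)
    (hδf : ∀ i, δ i = lamInv * (h * (P i * μ * P i) * h) * lamInv)
    (hKμ : (∑ i, P i * (h * lamInv * h) * P i) * μ = μ)
    (hK1 : (1 - ∑ i, P i * (h * lamInv * h) * P i).PosSemidef) :
    (∀ i, (lam - h * P i * h).PosSemidef) ∧ (∀ i, (lam - h * P i * h) * δ i = 0) ∧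
    (∑ i, (h * P i * h * δ i).trace = μ.trace) ∧
    (∀ j, μ * P j = P j * μ * P j) ∧
    (∀ j, P j * (h * lamInv * h) * P j * μ = P j * μ) := by
  classical
  have hlamh : lam.IsHermitian := hlamP.1
  have hσisub : ∀ i, h * P i * h = (P i * h)ᴴ * (P i * h) := by
    intro i
    rw [conjTranspose_mul, hh.1.eq, (hPh i).eq]
    simp only [mul_assoc]
    rw [rw2 (hPi i)]
  have hσiPSD : ∀ i, (h * P i * h).PosSemidef := fun i =>
    (hσisub i) ▸ posSemidef_conjTranspose_mul_self _
  -- sandwich sum helpers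
  have hsand_mul : ∀ (T : Fin m → Matrix (Fin N) (Fin N) ℂ) (j : Fin m),
      (∑ i, P i * T i * P i) * P j = P j * T j * P j := by
    intro T j
    rw [Finset.sum_mul, Finset.sum_eq_single j]
    · rw [mul_assoc (P j * T j) (P j) (P j), hPi j]
    · intro i _ hij
      rw [mul_assoc (P i * T i) (P i) (P j), hPo i j hij, mul_zero]
    · intro hj; exact absurd (Finset.mem_univ j) hj
  have hsand_mul' : ∀ (T : Fin m → Matrix (Fin N) (Fin N) ℂ) (j : Fin m),
      P j * (∑ i, P i * T i * P i) = P j * T j * P j := by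
    intro T j
    rw [Finset.mul_sum, Finset.sum_eq_single j]
    · calc P j * (P j * T j * P j) = (P j * P j) * (T j * P j) := by simp only [mul_assoc]
        _ = P j * T j * P j := by rw [hPi j, mul_assoc]
    · intro i _ hij
      calc P j * (P i * T i * P i) = (P j * P i) * (T i * P i) := by simp only [mul_assoc]
        _ = 0 := by rw [hPo j i (Ne.symm hij), zero_mul]
    · intro hj; exact absurd (Finset.mem_univ j) hj
  -- block structure of μ
  have hμPj : ∀ j, μ * P j = P j * μ * P j := by
    intro j
    conv_lhs => rw [← hμblk]
    exact hsand_mul (fun _ => μ) j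
  have hPjμ : ∀ j, P j * μ = P j * μ * P j := by
    intro j
    have := congrArg conjTranspose (hμPj j)
    rwa [conjTranspose_mul, conjTranspose_mul, conjTranspose_mul, (hPh j).eq, hμP.1.eq,
      ← mul_assoc] at this
  -- lam is supported on ε
  have hAε : (h * μ * h) * ε = h * μ * h := by rw [mul_assoc (h * μ) h ε, hhε]
  have hεA : ε * (h * μ * h) = h * μ * h := by
    rw [← mul_assoc, ← mul_assoc, hεh]
  have hlamε : lam * ε = lam := by
    have h0 : (lam * lam) * (1 - ε) = 0 := by
      rw [hlam2, mul_sub, mul_one, hAε, sub_self]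
    have := sq_zero hlamh rfl h0
    rw [mul_sub, mul_one, sub_eq_zero] at this
    exact this.symm
  have hεlam : ε * lam = lam := by
    have := congrArg conjTranspose hlamε
    rwa [conjTranspose_mul, hlamh.eq, hε.eq] at this
  -- spectral objects
  have hev : ∀ i, 0 ≤ hlamh.eigenvalues i := hlamP.eigenvalues_nonneg
  set ind := mfun hlamh (fun t => t * t⁻¹) with hind_def
  set pinv := mfun hlamh (fun t => t⁻¹) with hpinv_def
  set sf := mfun hlamh Real.sqrt with hsf_def
  set sInv := mfun hlamh (fun t => (Real.sqrt t)⁻¹) with hsInv_def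
  have hpl : pinv * lam = ind := by
    have h1 : pinv * mfun hlamh id = ind := by
      rw [hpinv_def, mfun_mul]
      exact mfun_congr _ (fun i => by simp [mul_comm])
    rwa [mfun_id] at h1
  have hlp : lam * pinv = ind := by
    have h1 : mfun hlamh id * pinv = ind := by
      rw [hpinv_def, mfun_mul]
      exact mfun_congr _ (fun i => by simp)
    rwa [mfun_id] at h1
  have hli : lam * ind = lam := by
    have h1 : mfun hlamh id * ind = mfun hlamh id := by
      rw [hind_def, mfun_mul]
      exact mfun_congr _ (fun i => by
        rcases eq_or_ne (hlamh.eigenvalues i) 0 with h0 | h0 <;> simp [h0])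
    rwa [mfun_id] at h1
  have hindpinv : ind * pinv = pinv := by
    rw [hind_def, hpinv_def, mfun_mul]
    exact mfun_congr _ (fun i => by
      rcases eq_or_ne (hlamh.eigenvalues i) 0 with h0 | h0
      · simp [h0]
      · rw [mul_inv_cancel₀ h0, one_mul])
  have hss : sInv * sInv = pinv := by
    rw [hsInv_def, hpinv_def, mfun_mul]
    exact mfun_congr _ (fun i => by
      rw [← mul_inv, Real.mul_self_sqrt (hev i)])
  have hsis : sInv * sf = ind := by
    rw [hsInv_def, hsf_def, hind_def, mfun_mul]
    refine mfun_congr _ (fun i => ?_)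
    rcases eq_or_lt_of_le (hev i) with h0 | h0
    · rw [← h0]; simp
    · rw [inv_mul_cancel₀ (by positivity), mul_inv_cancel₀ (ne_of_gt h0)]
  have hsfsf : sf * sf = lam := by
    have h1 : sf * sf = mfun hlamh id := by
      rw [hsf_def, mfun_mul]
      exact mfun_congr _ (fun i => Real.mul_self_sqrt (hev i))
    rwa [mfun_id] at h1
  have hindherm : ind.IsHermitian := mfun_isHermitian _ _
  have hsfherm : sf.IsHermitian := mfun_isHermitian _ _
  have hsInvherm : sInv.IsHermitian := mfun_isHermitian _ _
  have hpinvherm : pinv.IsHermitian := mfun_isHermitian _ _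
  -- ind = ε
  have hindε : ind * ε = ind := by
    have h1 : ind * (1 - ε) = 0 := by
      rw [← hpl, mul_assoc, mul_sub, mul_one, hlamε, sub_self, mul_zero]
    rw [mul_sub, mul_one, sub_eq_zero] at h1
    exact h1.symm
  have hεind : ε * ind = ε := by
    have h1 : ε * (1 - ind) = 0 := by
      rw [← hIL, mul_assoc, mul_sub, mul_one, hli, sub_self, mul_zero]
    rw [mul_sub, mul_one, sub_eq_zero] at h1
    exact h1.symm
  have hindeq : ind = ε := by
    have h2 := congrArg conjTranspose hεind
    rw [conjTranspose_mul, hindherm.eq, hε.eq] at h2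
    exact hindε.symm.trans h2
  -- replace lamInv by pinv between h's
  have hεpinv : ε * pinv = pinv := by rw [← hindeq, hindpinv]
  have hlamInvh : lamInv * h = pinv * h := by
    have hstep : h = lam * (pinv * h) := by
      rw [← mul_assoc, hlp, hindeq, hεh]
    calc lamInv * h = lamInv * (lam * (pinv * h)) := by rw [← hstep]
      _ = (lamInv * lam) * (pinv * h) := by rw [mul_assoc]
      _ = ε * (pinv * h) := by rw [hIL]
      _ = pinv * h := by rw [← mul_assoc, hεpinv]
  have hK : h * lamInv * h = h * pinv * h := by
    rw [mul_assoc, hlamInvh, mul_assoc]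
  have hKfact : h * lamInv * h = (sInv * h)ᴴ * (sInv * h) := by
    rw [hK, conjTranspose_mul, hsInvherm.eq, hh.1.eq]
    calc h * pinv * h = h * (sInv * sInv) * h := by rw [hss]
      _ = h * sInv * (sInv * h) := by simp only [mul_assoc]
  have hKPSD : (h * lamInv * h).PosSemidef := hKfact ▸ posSemidef_conjTranspose_mul_self _
  have hKherm : (h * lamInv * h).IsHermitian := hKPSD.1
  have hPKPfact : ∀ j, P j * (h * lamInv * h) * P j =
      (sInv * (h * P j))ᴴ * (sInv * (h * P j)) := by
    intro j
    rw [conjTranspose_mul, conjTranspose_mul, hsInvherm.eq, hh.1.eq, (hPh j).eq, hK]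
    simp only [mul_assoc]
    rw [rw2 hss]
  have hPKP_PSD : ∀ j, (P j * (h * lamInv * h) * P j).PosSemidef := fun j =>
    (hPKPfact j) ▸ posSemidef_conjTranspose_mul_self _
  -- the key relation: P j K P j μ = P j μ
  have hKμi : ∀ j, P j * (h * lamInv * h) * P j * μ = P j * μ := by
    intro j
    have h1 : P j * (∑ i, P i * (h * lamInv * h) * P i) =
        P j * (h * lamInv * h) * P j := hsand_mul' (fun _ => h * lamInv * h) j
    rw [← h1, mul_assoc, hKμ]
  -- GOAL2 ingredients
  have hlamδ : ∀ i, lam * δ i = h * (P i * μ * P i) * h * lamInv := by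
    intro i
    rw [hδf i]
    have hstep : lam * (lamInv * (h * (P i * μ * P i) * h) * lamInv) =
        (lam * lamInv) * (h * (P i * μ * P i) * h * lamInv) := by
      simp only [mul_assoc]
    rw [hstep, hLI, ← mul_assoc]
    refine congrArg (· * lamInv) ?_
    calc ε * (h * (P i * μ * P i) * h) = (ε * h) * ((P i * μ * P i) * h) := by
          simp only [mul_assoc]
      _ = h * (P i * μ * P i) * h := by rw [hεh]; simp only [mul_assoc]
  have hσδ : ∀ i, h * P i * h * δ i = lam * δ i := by
    intro i
    have hKr := hKμi i
    simp only [mul_assoc] at hKr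
    rw [hlamδ i, hδf i]
    calc h * P i * h * (lamInv * (h * (P i * μ * P i) * h) * lamInv)
        = h * (P i * (h * (lamInv * (h * (P i * (μ * (P i * (h * lamInv)))))))) := by
          simp only [mul_assoc]
      _ = h * ((P i * μ) * (P i * (h * lamInv))) := by rw [rw6 hKr]
      _ = h * (P i * μ * P i) * h * lamInv := by simp only [mul_assoc]
  have goal2 : ∀ i, (lam - h * P i * h) * δ i = 0 := by
    intro i
    rw [sub_mul, hσδ i, sub_self]
  -- GOAL3 : traces
  have goal3 : (∑ i, (h * P i * h * δ i).trace) = μ.trace := by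
    have htr : ∀ i, (h * P i * h * δ i).trace =
        ((P i * μ * P i) * (h * lamInv * h)).trace := by
      intro i
      rw [hσδ i, hlamδ i]
      calc (h * (P i * μ * P i) * h * lamInv).trace
          = (h * ((P i * μ * P i) * (h * lamInv))).trace := by simp only [mul_assoc]
        _ = (((P i * μ * P i) * (h * lamInv)) * h).trace := trace_mul_comm _ _
        _ = ((P i * μ * P i) * (h * lamInv * h)).trace := by simp only [mul_assoc]
    have h5 : ∀ i, (P i * (h * lamInv * h) * P i * μ).trace =
        ((P i * μ * P i) * (h * lamInv * h)).trace := by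
      intro i
      calc (P i * (h * lamInv * h) * P i * μ).trace
          = ((P i * (h * lamInv * h)) * (P i * μ)).trace := by simp only [mul_assoc]
        _ = ((P i * μ) * (P i * (h * lamInv * h))).trace := trace_mul_comm _ _
        _ = ((P i * μ * P i) * (h * lamInv * h)).trace := by simp only [mul_assoc]
    calc ∑ i, (h * P i * h * δ i).trace
        = ∑ i, ((P i * μ * P i) * (h * lamInv * h)).trace :=
          Finset.sum_congr rfl (fun i _ => htr i)
      _ = ∑ i, (P i * (h * lamInv * h) * P i * μ).trace :=
          Finset.sum_congr rfl (fun i _ => (h5 i).symm)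
      _ = ((∑ i, P i * (h * lamInv * h) * P i) * μ).trace := by
          rw [Finset.sum_mul, trace_sum]
      _ = μ.trace := by rw [hKμ]
  -- GOAL1 : lam ≥ σᵢ
  have goal1 : ∀ i, (lam - h * P i * h).PosSemidef := by
    intro i
    apply PosSemidef.of_dotProduct_mulVec_nonneg
    · exact hlamh.sub (hσiPSD i).1
    · intro x
      set u := (P i * h) *ᵥ x with hu
      set w := (sInv * (h * P i)) *ᵥ u with hw
      set v := sf *ᵥ x with hv
      have hb0 : star x ⬝ᵥ (h * P i * h) *ᵥ x = star u ⬝ᵥ u := dp_factor (hσisub i) x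
      have hure : star u ⬝ᵥ u = (((star u ⬝ᵥ u).re : ℝ) : ℂ) := by
        have hnn := dotProduct_star_self_nonneg u
        rw [Complex.le_def] at hnn
        exact Complex.ext rfl (by simpa using hnn.2.symm)
      have hM : (sInv * (h * P i))ᴴ * sf = P i * h := by
        rw [conjTranspose_mul, conjTranspose_mul, hsInvherm.eq, hh.1.eq, (hPh i).eq]
        calc P i * h * sInv * sf = P i * (h * (sInv * sf)) := by simp only [mul_assoc]
          _ = P i * h := by rw [hsis, hindeq, hhε]
      have hc : star w ⬝ᵥ v = (((star u ⬝ᵥ u).re : ℝ) : ℂ) := by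
        rw [hw, dp_shift, hv, mulVec_mulVec, hM, ← hu]
        exact hure
      have hwle : (star w ⬝ᵥ w).re ≤ (star u ⬝ᵥ u).re := by
        have hwq : star w ⬝ᵥ w = star u ⬝ᵥ (P i * (h * lamInv * h) * P i) *ᵥ u := by
          rw [hw]; exact (dp_factor (hPKPfact i) u).symm
        rw [hwq]
        have h1 : (star u ⬝ᵥ (P i * (h * lamInv * h) * P i) *ᵥ u).re ≤
            (star u ⬝ᵥ (∑ j, P j * (h * lamInv * h) * P j) *ᵥ u).re := by
          apply psd_mono
          have hrest : (∑ j, P j * (h * lamInv * h) * P j) - P i * (h * lamInv * h) * P i =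
              ∑ j ∈ Finset.univ.erase i, P j * (h * lamInv * h) * P j := by
            rw [eq_comm, Finset.sum_erase_eq_sub (Finset.mem_univ i)]
          rw [hrest]
          exact psd_sum _ hPKP_PSD _
        have h2 : (star u ⬝ᵥ (∑ j, P j * (h * lamInv * h) * P j) *ᵥ u).re ≤
            (star u ⬝ᵥ (1 : Matrix (Fin N) (Fin N) ℂ) *ᵥ u).re := psd_mono hK1 u
        rw [one_mulVec] at h2
        exact le_trans h1 h2
      have hcs := cauchy_dp w v _ hc hwle
      have hvq : star v ⬝ᵥ v = star x ⬝ᵥ lam *ᵥ x := by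
        have hfact : lam = sfᴴ * sf := by rw [hsfherm.eq, hsfsf]
        rw [hv]; exact (dp_factor hfact x).symm
      rw [hvq] at hcs
      rw [sub_mulVec, dotProduct_sub, hb0, psd_q_re hlamP x, hure, Complex.le_def]
      constructor
      · simp only [Complex.sub_re, Complex.ofReal_re, Complex.zero_re]
        linarith
      · simp only [Complex.sub_im, Complex.ofReal_im, Complex.zero_im, sub_zero]
  exact ⟨goal1, goal2, goal3, hμPj, hKμi⟩


theorem mp_lemma {N m : ℕ} (P : Fin m → Matrix (Fin N) (Fin N) ℂ)
    (hPh : ∀ i, (P i).IsHermitian) (hPi : ∀ i, P i * P i = P i)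
    (hPo : ∀ i j, i ≠ j → P i * P j = 0) (hPsum : ∑ i, P i = 1)
    (σ : Matrix (Fin N) (Fin N) ℂ) (hσ : σ.PosSemidef)
    (ε : Matrix (Fin N) (Fin N) ℂ) (hε : ε.IsHermitian) (hεproj : ε * ε = ε)
    (hεmin : ∀ F : Matrix (Fin N) (Fin N) ℂ, F.IsHermitian → F * F = F → σ * F = σ →
      ε * F = ε)
    (h : Matrix (Fin N) (Fin N) ℂ) (hh : h.PosSemidef) (hh2 : h * h = σ)
    (δ : Fin m → Matrix (Fin N) (Fin N) ℂ)
    (hδ : ∀ i, (δ i).PosSemidef) (hδsum : ∑ i, δ i = ε)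
    (hhε : h * ε = h) (hεh : ε * h = h)
    (hδε : ∀ i, δ i * ε = δ i) (hεδ : ∀ i, ε * δ i = δ i)
    (hσsum : ∑ i, h * P i * h = σ)
    (i₀ : Fin m) (lam₀ : Matrix (Fin N) (Fin N) ℂ)
    (hge : ∀ i, (lam₀ - h * P i * h).PosSemidef)
    (hzero : ∀ i, (lam₀ - h * P i * h) * δ i = 0) :
    ∃ μ lam lamInv : Matrix (Fin N) (Fin N) ℂ,
      μ.PosSemidef ∧ (∑ i, P i * μ * P i) = μ ∧
      lam.PosSemidef ∧ lam * lam = h * μ * h ∧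
      lamInv * lam = ε ∧ lam * lamInv = ε ∧
      (∀ i, δ i = lamInv * (h * (P i * μ * P i) * h) * lamInv) ∧
      (∑ i, P i * (h * lamInv * h) * P i) * μ = μ ∧
      (1 - ∑ i, P i * (h * lamInv * h) * P i).PosSemidef := by
  classical
  have hσisub : ∀ i, h * P i * h = (P i * h)ᴴ * (P i * h) := by
    intro i
    rw [conjTranspose_mul, hh.1.eq, (hPh i).eq]
    simp only [mul_assoc]
    rw [rw2 (hPi i)]
  have hσiPSD : ∀ i, (h * P i * h).PosSemidef := fun i =>
    (hσisub i) ▸ posSemidef_conjTranspose_mul_self _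
  have hlam₀h : lam₀.IsHermitian := by
    have h1 := ((hge i₀).1).add (hσiPSD i₀).1
    rwa [sub_add_cancel] at h1
  have hlam₀PSD : lam₀.PosSemidef := by
    have h1 := (hge i₀).add (hσiPSD i₀)
    rwa [sub_add_cancel] at h1
  have hlz : ∀ i, lam₀ * δ i = h * P i * h * δ i := by
    intro i
    have := hzero i
    rwa [sub_mul, sub_eq_zero] at this
  have hzl : ∀ i, δ i * lam₀ = δ i * (h * P i * h) := by
    intro i
    have := congrArg conjTranspose (hlz i)
    rwa [conjTranspose_mul, conjTranspose_mul, hlam₀h.eq, (hδ i).1.eq,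
      (hσiPSD i).1.eq] at this
  -- the dual certificate μ
  set μ := ∑ i, P i * (h * δ i * h) * P i with hμdef
  have hμterm_psd : ∀ i, (P i * (h * δ i * h) * P i).PosSemidef := by
    intro i
    have h1 := (hδ i).conjTranspose_mul_mul_same (B := h * P i)
    have h2 : (h * P i)ᴴ * δ i * (h * P i) = P i * (h * δ i * h) * P i := by
      rw [conjTranspose_mul, hh.1.eq, (hPh i).eq]
      simp only [mul_assoc]
    rwa [h2] at h1
  have hμPSD : μ.PosSemidef := psd_sum _ hμterm_psd Finset.univ
  have hμherm := hμPSD.1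
  have hsand_mul' : ∀ (T : Fin m → Matrix (Fin N) (Fin N) ℂ) (j : Fin m),
      P j * (∑ i, P i * T i * P i) = P j * T j * P j := by
    intro T j
    rw [Finset.mul_sum, Finset.sum_eq_single j]
    · calc P j * (P j * T j * P j) = (P j * P j) * (T j * P j) := by simp only [mul_assoc]
        _ = P j * T j * P j := by rw [hPi j, mul_assoc]
    · intro i _ hij
      calc P j * (P i * T i * P i) = (P j * P i) * (T i * P i) := by simp only [mul_assoc]
        _ = 0 := by rw [hPo j i (Ne.symm hij), zero_mul]
    · intro hj; exact absurd (Finset.mem_univ j) hj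
  have hblkterm : ∀ j, P j * μ * P j = P j * (h * δ j * h) * P j := by
    intro j
    have h1 : P j * μ = P j * (h * δ j * h) * P j := by
      conv_lhs => rw [hμdef]
      exact hsand_mul' _ j
    rw [h1, mul_assoc (P j * (h * δ j * h)) (P j) (P j), hPi j]
  have hμblk : ∑ j, P j * μ * P j = μ := by
    calc ∑ j, P j * μ * P j = ∑ j, P j * (h * δ j * h) * P j :=
          Finset.sum_congr rfl (fun j _ => hblkterm j)
      _ = μ := hμdef.symm
  -- A = h μ h = lam₀ ε lam₀
  have hterm : ∀ i, h * (P i * (h * δ i * h) * P i) * h = lam₀ * δ i * lam₀ := by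
    intro i
    calc h * (P i * (h * δ i * h) * P i) * h
        = (h * P i * h) * δ i * (h * P i * h) := by simp only [mul_assoc]
      _ = (lam₀ * δ i) * (h * P i * h) := by rw [← hlz i]
      _ = lam₀ * (δ i * (h * P i * h)) := by rw [mul_assoc]
      _ = lam₀ * (δ i * lam₀) := by rw [← hzl i]
      _ = lam₀ * δ i * lam₀ := by rw [mul_assoc]
  have hAeq : h * μ * h = lam₀ * ε * lam₀ := by
    calc h * μ * h = ∑ i, h * (P i * (h * δ i * h) * P i) * h := by
          rw [hμdef, Finset.mul_sum, Finset.sum_mul]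
      _ = ∑ i, lam₀ * δ i * lam₀ := Finset.sum_congr rfl (fun i _ => hterm i)
      _ = lam₀ * (∑ i, δ i) * lam₀ := by rw [Finset.mul_sum, Finset.sum_mul]
      _ = lam₀ * ε * lam₀ := by rw [hδsum]
  have hAPSD : (h * μ * h).PosSemidef := by
    have h1 := hμPSD.conjTranspose_mul_mul_same (B := h)
    rwa [hh.1.eq] at h1
  have hAherm : (h * μ * h).IsHermitian := hAPSD.1
  have hεA : ε * (h * μ * h) = h * μ * h := by rw [← mul_assoc, ← mul_assoc, hεh]
  have hAε : (h * μ * h) * ε = h * μ * h := by rw [mul_assoc (h * μ) h ε, hhε]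
  -- injectivity on ε-range
  have hinj : ∀ z, ε *ᵥ z = z → (h * μ * h) *ᵥ z = 0 → z = 0 := by
    intro z hz hAz
    have hfact : lam₀ * ε * lam₀ = (ε * lam₀)ᴴ * (ε * lam₀) := by
      rw [conjTranspose_mul, hε.eq, hlam₀h.eq]
      calc lam₀ * ε * lam₀ = lam₀ * (ε * ε) * lam₀ := by rw [hεproj]
        _ = lam₀ * ε * (ε * lam₀) := by simp only [mul_assoc]
    have hq : star z ⬝ᵥ (lam₀ * ε * lam₀) *ᵥ z = 0 := by
      rw [← hAeq, hAz, dotProduct_zero]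
    rw [dp_factor hfact] at hq
    have hεz : (ε * lam₀) *ᵥ z = 0 := dotProduct_star_self_eq_zero.mp hq
    have hql : star z ⬝ᵥ lam₀ *ᵥ z = 0 := by
      calc star z ⬝ᵥ lam₀ *ᵥ z = star (ε *ᵥ z) ⬝ᵥ lam₀ *ᵥ z := by rw [hz]
        _ = star z ⬝ᵥ (εᴴ *ᵥ (lam₀ *ᵥ z)) := dp_shift ε z (lam₀ *ᵥ z)
        _ = star z ⬝ᵥ ((ε * lam₀) *ᵥ z) := by rw [hε.eq, mulVec_mulVec]
        _ = 0 := by rw [hεz, dotProduct_zero]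
    have hσiz : ∀ i, (h * P i * h) *ᵥ z = 0 := by
      intro i
      apply ((hσiPSD i).dotProduct_mulVec_zero_iff z).mp
      have hle := psd_mono (hge i) z
      rw [hql] at hle
      simp only [Complex.zero_re] at hle
      have hge0 := (hσiPSD i).dotProduct_mulVec_nonneg z
      rw [Complex.le_def] at hge0
      rw [psd_q_re (hσiPSD i) z]
      have : (star z ⬝ᵥ (h * P i * h) *ᵥ z).re = 0 :=
        le_antisymm hle (by simpa using hge0.1)
      rw [this]
      simp
    have hhz : h *ᵥ z = 0 := by
      have hq2 : star z ⬝ᵥ σ *ᵥ z = 0 := by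
        have hσz : σ *ᵥ z = 0 := by
          rw [← hσsum, sum_mulVec']
          exact Finset.sum_eq_zero (fun i _ => hσiz i)
        rw [hσz, dotProduct_zero]
      have hfact2 : σ = hᴴ * h := by rw [hh.1.eq, hh2]
      rw [dp_factor hfact2] at hq2
      exact dotProduct_star_self_eq_zero.mp hq2
    have hFz : mfun hh.1 (fun t => t * t⁻¹) *ᵥ z = 0 := by
      have hFdec : mfun hh.1 (fun t => t * t⁻¹) = mfun hh.1 (fun t => t⁻¹) * h := by
        have h1 : mfun hh.1 (fun t => t⁻¹) * mfun hh.1 id = mfun hh.1 (fun t => t * t⁻¹) := by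
          rw [mfun_mul]
          exact mfun_congr _ (fun i => by simp [mul_comm])
        rw [mfun_id] at h1
        exact h1.symm
      rw [hFdec, ← mulVec_mulVec, hhz, mulVec_zero]
    have hεF : ε * mfun hh.1 (fun t => t * t⁻¹) = ε := by
      apply hεmin
      · exact mfun_isHermitian _ _
      · rw [mfun_mul]
        exact mfun_congr _ (fun i => by
          rcases eq_or_ne (hh.1.eigenvalues i) 0 with h0 | h0 <;> simp [h0])
      · have hhF : h * mfun hh.1 (fun t => t * t⁻¹) = h := by
          have h1 : mfun hh.1 id * mfun hh.1 (fun t => t * t⁻¹) = mfun hh.1 id := by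
            rw [mfun_mul]
            exact mfun_congr _ (fun i => by
              rcases eq_or_ne (hh.1.eigenvalues i) 0 with h0 | h0 <;> simp [h0])
          rwa [mfun_id] at h1
        calc σ * mfun hh.1 (fun t => t * t⁻¹)
            = h * (h * mfun hh.1 (fun t => t * t⁻¹)) := by rw [← hh2, mul_assoc]
          _ = σ := by rw [hhF, hh2]
    calc z = ε *ᵥ z := hz.symm
      _ = (ε * mfun hh.1 (fun t => t * t⁻¹)) *ᵥ z := by rw [hεF]
      _ = ε *ᵥ (mfun hh.1 (fun t => t * t⁻¹) *ᵥ z) := (mulVec_mulVec _ _ _).symm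
      _ = 0 := by rw [hFz, mulVec_zero]
  -- support of A equals ε
  have hev : ∀ i, 0 ≤ hAherm.eigenvalues i := hAPSD.eigenvalues_nonneg
  have hSfact : mfun hAherm (fun t => t * t⁻¹) = (h * μ * h) * mfun hAherm (fun t => t⁻¹) := by
    have h1 : mfun hAherm id * mfun hAherm (fun t => t⁻¹) = mfun hAherm (fun t => t * t⁻¹) := by
      rw [mfun_mul]
      exact mfun_congr _ (fun i => rfl)
    rw [mfun_id] at h1
    exact h1.symm
  have hAS : (h * μ * h) * mfun hAherm (fun t => t * t⁻¹) = h * μ * h := by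
    have h1 : mfun hAherm id * mfun hAherm (fun t => t * t⁻¹) = mfun hAherm id := by
      rw [mfun_mul]
      exact mfun_congr _ (fun i => by
        rcases eq_or_ne (hAherm.eigenvalues i) 0 with h0 | h0 <;> simp [h0])
    rwa [mfun_id] at h1
  have hεS : ε * mfun hAherm (fun t => t * t⁻¹) = mfun hAherm (fun t => t * t⁻¹) := by
    rw [hSfact, ← mul_assoc, hεA]
  have hSherm : (mfun hAherm (fun t => t * t⁻¹)).IsHermitian := mfun_isHermitian _ _
  have hSε : mfun hAherm (fun t => t * t⁻¹) * ε = mfun hAherm (fun t => t * t⁻¹) := by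
    have h2 := congrArg conjTranspose hεS
    rwa [conjTranspose_mul, hSherm.eq, hε.eq] at h2
  have hSeq : mfun hAherm (fun t => t * t⁻¹) = ε := by
    have hZ : ε - mfun hAherm (fun t => t * t⁻¹) = 0 := by
      apply eq_zero_of_mulVec
      intro x
      apply hinj
      · rw [mulVec_mulVec, mul_sub, hεproj, hεS]
      · rw [mulVec_mulVec, mul_sub, hAε, hAS, sub_self, zero_mulVec]
    have := sub_eq_zero.mp hZ
    exact this.symm
  -- lam and lamInv
  set lam := mfun hAherm Real.sqrt with hlamdef
  set lamInv := mfun hAherm (fun t => (Real.sqrt t)⁻¹) with hlamInvdef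
  have hlamPSD : lam.PosSemidef := mfun_posSemidef _ (fun i => Real.sqrt_nonneg _)
  have hlamInvPSD : lamInv.PosSemidef := mfun_posSemidef _ (fun i => by positivity)
  have hlamh : lam.IsHermitian := hlamPSD.1
  have hlamInvh : lamInv.IsHermitian := hlamInvPSD.1
  have hlam2 : lam * lam = h * μ * h := by
    have h1 : lam * lam = mfun hAherm id := by
      rw [hlamdef, mfun_mul]
      exact mfun_congr _ (fun i => Real.mul_self_sqrt (hev i))
    rwa [mfun_id] at h1
  have hILf : lamInv * lam = ε := by
    have h1 : lamInv * lam = mfun hAherm (fun t => t * t⁻¹) := by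
      rw [hlamInvdef, hlamdef, mfun_mul]
      refine mfun_congr _ (fun i => ?_)
      rcases eq_or_lt_of_le (hev i) with h0 | h0
      · rw [← h0]; simp
      · rw [inv_mul_cancel₀ (by positivity), mul_inv_cancel₀ (ne_of_gt h0)]
    rw [h1, hSeq]
  have hLIf : lam * lamInv = ε := by
    have h1 : lam * lamInv = mfun hAherm (fun t => t * t⁻¹) := by
      rw [hlamInvdef, hlamdef, mfun_mul]
      refine mfun_congr _ (fun i => ?_)
      rcases eq_or_lt_of_le (hev i) with h0 | h0
      · rw [← h0]; simp
      · rw [mul_inv_cancel₀ (by positivity), mul_inv_cancel₀ (ne_of_gt h0)]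
    rw [h1, hSeq]
  have hILL : lamInv * lam * lamInv = lamInv := by
    have h1 : lamInv * lam * lamInv =
        mfun hAherm (fun t => (Real.sqrt t)⁻¹ * Real.sqrt t * (Real.sqrt t)⁻¹) := by
      rw [hlamInvdef, hlamdef, mfun_mul, mfun_mul]
    rw [h1]
    refine mfun_congr _ (fun i => ?_)
    rcases eq_or_lt_of_le (hev i) with h0 | h0
    · rw [← h0]; simp
    · rw [inv_mul_cancel₀ (by positivity), one_mul]
  -- lam = ε lam₀ ε
  have hGPSD : (ε * lam₀ * ε).PosSemidef := by
    have h1 := hlam₀PSD.conjTranspose_mul_mul_same (B := ε)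
    rwa [hε.eq] at h1
  have hG2 : (ε * lam₀ * ε) * (ε * lam₀ * ε) = h * μ * h := by
    calc (ε * lam₀ * ε) * (ε * lam₀ * ε)
        = ε * (lam₀ * ((ε * ε) * (lam₀ * ε))) := by simp only [mul_assoc]
      _ = ε * (lam₀ * (ε * (lam₀ * ε))) := by rw [hεproj]
      _ = ε * ((lam₀ * ε * lam₀) * ε) := by simp only [mul_assoc]
      _ = ε * ((h * μ * h) * ε) := by rw [← hAeq]
      _ = ε * (h * μ * h) := by rw [hAε]
      _ = h * μ * h := hεA
  have hGeq : lam = ε * lam₀ * ε := by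
    apply psd_eq_of_sq hlamPSD hGPSD
    rw [pow_two, pow_two, hlam2, hG2]
  have hlamδ : ∀ i, lam * δ i = lam₀ * δ i := by
    intro i
    rw [hGeq]
    calc ε * lam₀ * ε * δ i = ε * (lam₀ * (ε * δ i)) := by simp only [mul_assoc]
      _ = ε * (lam₀ * δ i) := by rw [hεδ i]
      _ = ε * (h * P i * h * δ i) := by rw [hlz i]
      _ = (ε * h) * (P i * (h * δ i)) := by simp only [mul_assoc]
      _ = h * (P i * (h * δ i)) := by rw [hεh]
      _ = h * P i * h * δ i := by simp only [mul_assoc]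
      _ = lam₀ * δ i := (hlz i).symm
  have hδlam : ∀ i, δ i * lam = δ i * lam₀ := by
    intro i
    have h1 := congrArg conjTranspose (hlamδ i)
    rwa [conjTranspose_mul, conjTranspose_mul, hlamh.eq, hlam₀h.eq, (hδ i).1.eq] at h1
  -- δ in standard form
  have hδform : ∀ i, δ i = lamInv * (h * (P i * μ * P i) * h) * lamInv := by
    intro i
    have hmid : h * (P i * μ * P i) * h = lam * δ i * lam := by
      have h1 : P i * μ * P i = P i * (h * δ i * h) * P i := hblkterm i
      rw [h1, hterm i]
      calc lam₀ * δ i * lam₀ = (lam * δ i) * lam₀ := by rw [← hlamδ i]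
        _ = lam * (δ i * lam₀) := by rw [mul_assoc]
        _ = lam * (δ i * lam) := by rw [← hδlam i]
        _ = lam * δ i * lam := by rw [mul_assoc]
    rw [hmid]
    calc δ i = ε * (δ i * ε) := by rw [hδε i, hεδ i]
      _ = (lamInv * lam) * (δ i * (lam * lamInv)) := by rw [hILf, hLIf]
      _ = lamInv * (lam * δ i * lam) * lamInv := by simp only [mul_assoc]
  -- condition 8
  have hinvlamδ : ∀ i, lamInv * (h * P i * h * δ i) = δ i := by
    intro i
    rw [← hlz i, ← hlamδ i, ← mul_assoc, hILf]
    exact hεδ i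
  have hKT : ∀ i, (P i * (h * lamInv * h) * P i) * (P i * (h * δ i * h) * P i)
      = P i * (h * δ i * h) * P i := by
    intro i
    have h1 := hinvlamδ i
    simp only [mul_assoc] at h1
    calc (P i * (h * lamInv * h) * P i) * (P i * (h * δ i * h) * P i)
        = P i * (h * (lamInv * (h * (P i * (P i * (h * (δ i * (h * P i)))))))) := by
          simp only [mul_assoc]
      _ = P i * (h * (lamInv * (h * (P i * (h * (δ i * (h * P i))))))) := by
          rw [rw2 (hPi i)]
      _ = P i * (h * (δ i * (h * P i))) := by rw [rw5 h1]
      _ = P i * (h * δ i * h) * P i := by simp only [mul_assoc]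
  have hcond8 : (∑ j, P j * (h * lamInv * h) * P j) * μ = μ := by
    have hfull : ∀ i, (∑ j, P j * (h * lamInv * h) * P j) * (P i * (h * δ i * h) * P i)
        = P i * (h * δ i * h) * P i := by
      intro i
      rw [Finset.sum_mul, Finset.sum_eq_single i]
      · exact hKT i
      · intro j _ hji
        calc (P j * (h * lamInv * h) * P j) * (P i * (h * δ i * h) * P i)
            = P j * (h * (lamInv * (h * (P j * (P i * ((h * δ i * h) * P i)))))) := by
              simp only [mul_assoc]
          _ = 0 := by rw [rw2 (hPo j i hji)]; simp
      · intro hi; exact absurd (Finset.mem_univ i) hi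
    calc (∑ j, P j * (h * lamInv * h) * P j) * μ
        = ∑ i, (∑ j, P j * (h * lamInv * h) * P j) * (P i * (h * δ i * h) * P i) := by
          rw [hμdef, Finset.mul_sum]
      _ = ∑ i, P i * (h * δ i * h) * P i := Finset.sum_congr rfl (fun i _ => hfull i)
      _ = μ := hμdef.symm
  -- condition 9
  have hgeG : ∀ i, (lam - h * P i * h).PosSemidef := by
    intro i
    have h1 := (hge i).conjTranspose_mul_mul_same (B := ε)
    rw [hε.eq] at h1
    have h2 : ε * (lam₀ - h * P i * h) * ε = lam - h * P i * h := by
      have hεσiε : ε * (h * P i * h) * ε = h * P i * h := by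
        calc ε * (h * P i * h) * ε = ε * (h * (P i * (h * ε))) := by simp only [mul_assoc]
          _ = ε * (h * (P i * h)) := by rw [hhε]
          _ = h * (P i * h) := by rw [rw2 hεh]
          _ = h * P i * h := by simp only [mul_assoc]
      rw [mul_sub, sub_mul, ← hGeq, hεσiε]
    rwa [h2] at h1
  have hcond9 : (1 - ∑ j, P j * (h * lamInv * h) * P j).PosSemidef := by
    have hsplit : 1 - ∑ j, P j * (h * lamInv * h) * P j
        = ∑ j, (P j - P j * (h * lamInv * h) * P j) := by
      rw [Finset.sum_sub_distrib, hPsum]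
    rw [hsplit]
    apply psd_sum
    intro i
    -- K is psd
    have hr2 : mfun hAherm (fun t => (Real.sqrt (Real.sqrt t))⁻¹) *
        mfun hAherm (fun t => (Real.sqrt (Real.sqrt t))⁻¹) = lamInv := by
      rw [mfun_mul, hlamInvdef]
      refine mfun_congr _ (fun j => ?_)
      rw [← mul_inv, Real.mul_self_sqrt (Real.sqrt_nonneg _)]
    have hrherm : (mfun hAherm (fun t => (Real.sqrt (Real.sqrt t))⁻¹)).IsHermitian :=
      mfun_isHermitian _ _
    have hKfact : h * lamInv * h =
        (mfun hAherm (fun t => (Real.sqrt (Real.sqrt t))⁻¹) * h)ᴴ *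
        (mfun hAherm (fun t => (Real.sqrt (Real.sqrt t))⁻¹) * h) := by
      rw [conjTranspose_mul, hrherm.eq, hh.1.eq]
      calc h * lamInv * h = h * (mfun hAherm (fun t => (Real.sqrt (Real.sqrt t))⁻¹) *
          mfun hAherm (fun t => (Real.sqrt (Real.sqrt t))⁻¹)) * h := by rw [hr2]
        _ = h * mfun hAherm (fun t => (Real.sqrt (Real.sqrt t))⁻¹) *
            (mfun hAherm (fun t => (Real.sqrt (Real.sqrt t))⁻¹) * h) := by
          simp only [mul_assoc]
    have hKPSD : (h * lamInv * h).PosSemidef :=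
      hKfact ▸ posSemidef_conjTranspose_mul_self _
    have hPKP_PSD : (P i * (h * lamInv * h) * P i).PosSemidef := by
      have h1 := hKPSD.conjTranspose_mul_mul_same (B := P i)
      rwa [(hPh i).eq] at h1
    apply PosSemidef.of_dotProduct_mulVec_nonneg
    · exact (hPh i).sub hPKP_PSD.1
    · intro x
      set u := P i *ᵥ x with hu
      have hPu : P i *ᵥ u = u := by rw [hu, mulVec_mulVec, hPi i]
      have hPifact : P i = (P i)ᴴ * P i := by rw [(hPh i).eq, hPi i]
      have hqP : star x ⬝ᵥ P i *ᵥ x = star u ⬝ᵥ u := dp_factor hPifact x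
      have hqK : star x ⬝ᵥ (P i * (h * lamInv * h) * P i) *ᵥ x
          = star u ⬝ᵥ (h * lamInv * h) *ᵥ u := by
        have h1 := dp_sandwich (h * lamInv * h) (P i) x
        rwa [(hPh i).eq, ← hu] at h1
      set w := lamInv *ᵥ (h *ᵥ u) with hw
      set wt := (P i * h) *ᵥ w with hwt
      have hLq : star u ⬝ᵥ (h * lamInv * h) *ᵥ u
          = star (h *ᵥ u) ⬝ᵥ lamInv *ᵥ (h *ᵥ u) := by
        have h1 := dp_sandwich lamInv h u
        rwa [hh.1.eq] at h1
      have hc : star wt ⬝ᵥ u = (((star u ⬝ᵥ (h * lamInv * h) *ᵥ u).re : ℝ) : ℂ) := by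
        calc star wt ⬝ᵥ u = star w ⬝ᵥ ((P i * h)ᴴ *ᵥ u) := by rw [hwt]; exact dp_shift _ _ _
          _ = star w ⬝ᵥ ((h * P i) *ᵥ u) := by
            rw [conjTranspose_mul, hh.1.eq, (hPh i).eq]
          _ = star w ⬝ᵥ (h *ᵥ u) := by rw [← mulVec_mulVec, hPu]
          _ = star (h *ᵥ u) ⬝ᵥ (lamInv *ᵥ (h *ᵥ u)) := by
            rw [hw, dp_shift, hlamInvh.eq]
          _ = star u ⬝ᵥ (h * lamInv * h) *ᵥ u := hLq.symm
          _ = _ := psd_q_re hKPSD u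
      have hwle : (star wt ⬝ᵥ wt).re ≤ (star u ⬝ᵥ (h * lamInv * h) *ᵥ u).re := by
        have h1 : star wt ⬝ᵥ wt = star w ⬝ᵥ (h * P i * h) *ᵥ w := by
          rw [hwt, dp_factor (hσisub i) w]
        have h2 : (star w ⬝ᵥ (h * P i * h) *ᵥ w).re ≤ (star w ⬝ᵥ lam *ᵥ w).re :=
          psd_mono (hgeG i) w
        have h3 : star w ⬝ᵥ lam *ᵥ w = star u ⬝ᵥ (h * lamInv * h) *ᵥ u := by
          have h4 := dp_sandwich lam lamInv (h *ᵥ u)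
          rw [hlamInvh.eq, hILL] at h4
          calc star w ⬝ᵥ lam *ᵥ w = star (h *ᵥ u) ⬝ᵥ lamInv *ᵥ (h *ᵥ u) := by
                rw [hw, ← h4]
            _ = star u ⬝ᵥ (h * lamInv * h) *ᵥ u := hLq.symm
        rw [h1]
        rw [h3] at h2
        exact h2
      have hcs := cauchy_dp wt u _ hc hwle
      rw [sub_mulVec, dotProduct_sub, hqP, hqK, dp_self_re u,
        psd_q_re hKPSD u, Complex.le_def]
      constructor
      · simp only [Complex.sub_re, Complex.ofReal_re, Complex.zero_re]
        linarith
      · simp only [Complex.sub_im, Complex.ofReal_im, Complex.zero_im, sub_zero]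
  exact ⟨μ, lam, lamInv, hμPSD, hμblk, hlamPSD, hlam2, hILf, hLIf, hδform, hcond8, hcond9⟩

set_option maxHeartbeats 1000000 in
/-- **Theorem 2.2.3** (signal-space form of the optimal identification problem).
`K^m` is modelled as `Fin N → ℂ` with block (diagonal) projections `P i`, `σ` is the
positive semidefinite correlation block operator with support projection `ε`,
`h = σ^{1/2}`, `σᵢ = h Pᵢ h`, and `ϵ(a) = ∑ᵢ Pᵢ a Pᵢ` is the block-diagonal part.
A decomposition `∑ᵢ δᵢ = ε` into positive semidefinite `δᵢ` satisfies the optimality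
conditions `(λ − σᵢ) δᵢ = 0`, `λ ≥ σᵢ` iff it has the form
`δᵢ = λ⁻¹ h μᵢ h λ⁻¹` with `λ = (h μ h)^{1/2}` and block-diagonal `μ ≥ 0` satisfying
`μ = ϵ(h λ⁻¹ h) μ`, `1 ≥ ϵ(h λ⁻¹ h)`; when `ε = 1` these reduce to `μ = ϵ(√(σ μ))`,
and the quality of optimal identification is `Tr μ`. -/
theorem optimal_identification_signal_space {N m : ℕ}
    (P : Fin m → Matrix (Fin N) (Fin N) ℂ)
    (hPh : ∀ i, (P i).IsHermitian) (hPi : ∀ i, P i * P i = P i)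
    (hPo : ∀ i j, i ≠ j → P i * P j = 0) (hPsum : ∑ i, P i = 1)
    (σ : Matrix (Fin N) (Fin N) ℂ) (hσ : σ.PosSemidef)
    (ε : Matrix (Fin N) (Fin N) ℂ) (hε : ε.IsHermitian) (hεproj : ε * ε = ε)
    (hσε : σ * ε = σ)
    (hεmin : ∀ F : Matrix (Fin N) (Fin N) ℂ, F.IsHermitian → F * F = F → σ * F = σ →
      ε * F = ε)
    (h : Matrix (Fin N) (Fin N) ℂ) (hh : h.PosSemidef) (hh2 : h * h = σ)
    (δ : Fin m → Matrix (Fin N) (Fin N) ℂ)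
    (hδ : ∀ i, (δ i).PosSemidef) (hδsum : ∑ i, δ i = ε) :
    ((∃ lam : Matrix (Fin N) (Fin N) ℂ,
        (∀ i, (lam - h * P i * h).PosSemidef) ∧
        (∀ i, (lam - h * P i * h) * δ i = 0)) ↔
      (∃ μ lam lamInv : Matrix (Fin N) (Fin N) ℂ,
        μ.PosSemidef ∧ (∑ i, P i * μ * P i) = μ ∧
        lam.PosSemidef ∧ lam * lam = h * μ * h ∧
        lamInv * lam = ε ∧ lam * lamInv = ε ∧
        (∀ i, δ i = lamInv * (h * (P i * μ * P i) * h) * lamInv) ∧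
        (∑ i, P i * (h * lamInv * h) * P i) * μ = μ ∧
        (1 - ∑ i, P i * (h * lamInv * h) * P i).PosSemidef)) ∧
    (∀ μ lam lamInv : Matrix (Fin N) (Fin N) ℂ,
      μ.PosSemidef → (∑ i, P i * μ * P i) = μ →
      lam.PosSemidef → lam * lam = h * μ * h →
      lamInv * lam = ε → lam * lamInv = ε →
      (∀ i, δ i = lamInv * (h * (P i * μ * P i) * h) * lamInv) →
      (∑ i, P i * (h * lamInv * h) * P i) * μ = μ →
      (1 - ∑ i, P i * (h * lamInv * h) * P i).PosSemidef →
      ((∑ i, ((h * P i * h * δ i).trace).re = (μ.trace).re) ∧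
        (ε = 1 → ∀ hinv : Matrix (Fin N) (Fin N) ℂ, h * hinv = 1 → hinv * h = 1 →
          (μ = ∑ i, P i * (h * lam * hinv) * P i ∧
            (h * lam * hinv) * (h * lam * hinv) = σ * μ)))) := by
  classical
  by_cases htriv : (1 : Matrix (Fin N) (Fin N) ℂ) = 0
  · have all0 : ∀ X : Matrix (Fin N) (Fin N) ℂ, X = 0 := fun X => by
      calc X = X * 1 := (mul_one X).symm
        _ = X * 0 := by rw [htriv]
        _ = 0 := mul_zero X
    have allPSD : ∀ X : Matrix (Fin N) (Fin N) ℂ, X.PosSemidef := fun X => by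
      rw [all0 X]; exact .zero
    have allEq : ∀ X Y : Matrix (Fin N) (Fin N) ℂ, X = Y := fun X Y =>
      (all0 X).trans (all0 Y).symm
    refine ⟨⟨fun _ => ⟨0, 0, 0, allPSD _, allEq _ _, allPSD _, allEq _ _, allEq _ _,
      allEq _ _, fun i => allEq _ _, allEq _ _, allPSD _⟩,
      fun _ => ⟨0, fun i => allPSD _, fun i => allEq _ _⟩⟩, ?_⟩
    intro μ lam lamInv _ _ _ _ _ _ _ _ _
    constructor
    · have h1 : ∀ i : Fin m, h * P i * h * δ i = (0 : Matrix (Fin N) (Fin N) ℂ) :=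
        fun i => all0 _
      rw [all0 μ]
      simp [h1]
    · intro _ hinv _ _
      exact ⟨allEq _ _, allEq _ _⟩
  · have hm0 : m ≠ 0 := by
      rintro rfl
      exact htriv (by simpa using hPsum.symm)
    have hεσ : ε * σ = σ := by
      have h1 := congrArg conjTranspose hσε
      rwa [conjTranspose_mul, hσ.1.eq, hε.eq] at h1
    have hhε : h * ε = h := by
      have h1 : σ * (1 - ε) = 0 := by rw [mul_sub, mul_one, hσε, sub_self]
      have h2 := sq_zero hh.1 hh2 h1
      rw [mul_sub, mul_one, sub_eq_zero] at h2
      exact h2.symm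
    have hεh : ε * h = h := by
      have h1 := congrArg conjTranspose hhε
      rwa [conjTranspose_mul, hh.1.eq, hε.eq] at h1
    have hδε : ∀ i, δ i * ε = δ i := by
      intro i
      have hEδE : (1 - ε)ᴴ * δ i * (1 - ε) = 0 := by
        refine psd_sum_zero (f := fun j => (1 - ε)ᴴ * δ j * (1 - ε))
          (fun j => (hδ j).conjTranspose_mul_mul_same _) ?_ i
        calc ∑ j, (1 - ε)ᴴ * δ j * (1 - ε) = (1 - ε)ᴴ * (∑ j, δ j) * (1 - ε) := by
              rw [Finset.mul_sum, Finset.sum_mul]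
          _ = (1 - ε)ᴴ * ε * (1 - ε) := by rw [hδsum]
          _ = 0 := by
              have hε0 : ε * (1 - ε) = 0 := by rw [mul_sub, mul_one, hεproj, sub_self]
              rw [mul_assoc, hε0, mul_zero]
      have h2 : δ i * (1 - ε) = 0 := psd_annihilate (hδ i) hEδE
      rw [mul_sub, mul_one, sub_eq_zero] at h2
      exact h2.symm
    have hεδ : ∀ i, ε * δ i = δ i := by
      intro i
      have h1 := congrArg conjTranspose (hδε i)
      rwa [conjTranspose_mul, hε.eq, (hδ i).1.eq] at h1
    have hσsum : ∑ i, h * P i * h = σ := by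
      calc ∑ i, h * P i * h = (∑ i, h * P i) * h := by rw [Finset.sum_mul]
        _ = (h * ∑ i, P i) * h := by rw [Finset.mul_sum]
        _ = σ := by rw [hPsum, mul_one, hh2]
    constructor
    · constructor
      · rintro ⟨lam₀, hge, hzero⟩
        exact mp_lemma P hPh hPi hPo hPsum σ hσ ε hε hεproj hεmin h hh hh2 δ hδ hδsum
          hhε hεh hδε hεδ hσsum ⟨0, Nat.pos_of_ne_zero hm0⟩ lam₀ hge hzero
      · rintro ⟨μ, lam, lamInv, h1, h2, h3, h4, h5, h6, h7, h8, h9⟩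
        obtain ⟨g1, g2, -, -, -⟩ := ctx_lemma P hPh hPi hPo h ε hh hε hhε hεh δ μ lam lamInv
          h1 h2 h3 h4 h5 h6 h7 h8 h9
        exact ⟨lam, g1, g2⟩
    · intro μ lam lamInv h1 h2 h3 h4 h5 h6 h7 h8 h9
      obtain ⟨-, -, g3, hμPj, hKμi⟩ := ctx_lemma P hPh hPi hPo h ε hh hε hhε hεh δ μ lam lamInv
        h1 h2 h3 h4 h5 h6 h7 h8 h9
      constructor
      · rw [← Complex.re_sum]
        exact congrArg Complex.re g3
      · intro hε1 hinv hhinv hinvh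
        rw [hε1] at h5 h6
        have hhμ : h * μ = lam * lam * hinv := by
          calc h * μ = h * μ * (h * hinv) := by rw [hhinv, mul_one]
            _ = (h * μ * h) * hinv := by simp only [mul_assoc]
            _ = lam * lam * hinv := by rw [← h4]
        refine ⟨?_, ?_⟩
        · have hterm2 : ∀ j, P j * μ * P j = P j * (h * lam * hinv) * P j := by
            intro j
            calc P j * μ * P j = (P j * (h * lamInv * h) * P j * μ) * P j := by rw [hKμi j]
              _ = P j * (h * lamInv * h) * (P j * μ * P j) := by simp only [mul_assoc]
              _ = P j * (h * lamInv * h) * (μ * P j) := by rw [← hμPj j]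
              _ = P j * (h * (lamInv * ((h * μ) * P j))) := by simp only [mul_assoc]
              _ = P j * (h * (lamInv * ((lam * lam * hinv) * P j))) := by rw [hhμ]
              _ = P j * (h * ((lamInv * lam) * (lam * (hinv * P j)))) := by
                  simp only [mul_assoc]
              _ = P j * (h * (1 * (lam * (hinv * P j)))) := by rw [h5]
              _ = P j * (h * (lam * (hinv * P j))) := by rw [one_mul]
              _ = P j * (h * lam * hinv) * P j := by simp only [mul_assoc]
          calc μ = ∑ j, P j * μ * P j := h2.symm
            _ = ∑ j, P j * (h * lam * hinv) * P j :=
                Finset.sum_congr rfl (fun j _ => hterm2 j)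
        · calc (h * lam * hinv) * (h * lam * hinv)
              = h * (lam * ((hinv * h) * (lam * hinv))) := by simp only [mul_assoc]
            _ = h * (lam * (1 * (lam * hinv))) := by rw [hinvh]
            _ = h * (lam * (lam * hinv)) := by rw [one_mul]
            _ = (h * (lam * lam)) * hinv := by simp only [mul_assoc]
            _ = (h * (h * μ * h)) * hinv := by rw [h4]
            _ = (h * h) * μ * (h * hinv) := by simp only [mul_assoc]
            _ = σ * μ := by rw [hh2, hhinv, mul_one]
end

section
/- Let σ = [σ_ik] be a positive semidefinite block operator on K^m = ⊕_{i=1}^m K_i (the correlation matrix σ_ik = H_iH_k* of m wave patterns) and h = σ^{1/2}. If the block-diagonal part ϵ(h) of h commutes with h, then the optimality conditions of the identification problem are satisfied with μ_i° = (h_ii)², the optimal decision operators in signal space are δ_i° = 1_i (equivalently D_i° = V_i*V_i with V = h⁻¹H), and the quality of optimal identification is ϰ° = Σ_{i=1}^m Tr((h_ii)²). In particular, for m pure patterns given by nonorthogonal amplitudes ψ₁, …, ψ_m (so K_i = ℂ and σ = [⟨ψ_i, ψ_k⟩] is an m×m matrix) whose square root h = √σ has equal diagonal entries h_ii = a for all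 i, the maximal intensity of optimally separated signals is ϰ° = m·a² = (Tr σ^{1/2})²/m. -/
open Matrix
open scoped ComplexOrder

/-!
Put `ε = ∑ᵢ Pᵢ h Pᵢ` and `Λ = h ε`. The conditions `Λ ≥ h Pᵢ h` and `(Λ - h Pᵢ h) Pᵢ = 0` are
complementary slackness for the trace maximisation, so `δᵢ = Pᵢ` is optimal, with value
`tr Λ = ∑ᵢ tr (hᵢᵢ)²`.

For `Λ ≥ h Pᵢ h` write `Λ - h Pᵢ h = h R` with `R = ε - Pᵢ h`. Since `Pᵢ ε = Pᵢ h Pᵢ` and `ε`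
commutes with `h`, `Pᵢ h R = 0`, hence `ε (h R) = Rᴴ h R ≥ 0`. The Hermitian matrix `h R` commutes
with `ε`, so each of its eigenspaces contains an eigenvector `x` of `ε`, with eigenvalue `s ≥ 0`,
and `s ⟪x, h R x⟫ = ⟪R x, h R x⟫ ≥ 0`; for `s = 0` this forces `h R x = 0`.

For pure states `Pᵢ` are the diagonal matrix units, and a constant diagonal `hᵢᵢ = a` makes
`ε = a • 1`, which commutes with `h`.
-/

lemma Complex.nonneg_of_mul_nonneg_left {a b : ℂ} (h : 0 ≤ a * b) (hb : 0 < b) : 0 ≤ a := by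
  simpa [hb.ne'] using mul_nonneg h (inv_pos.mpr hb).le

namespace Matrix

variable {n : Type*} [Fintype n]

theorem PosSemidef.nonneg_of_mulVec_eq_smul {E : Matrix n n ℂ} (hE : E.PosSemidef) {s : ℂ}
    {x : n → ℂ} (hx : x ≠ 0) (hEx : E *ᵥ x = s • x) : 0 ≤ s := by
  have h := hE.dotProduct_mulVec_nonneg x
  rw [hEx, dotProduct_smul, smul_eq_mul] at h
  exact Complex.nonneg_of_mul_nonneg_left h (dotProduct_star_self_pos_iff.mpr hx)

theorem trace_mul_mul_sq_of_isIdempotentElem {p : Matrix n n ℂ} (hp : IsIdempotentElem p)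
    (a : Matrix n n ℂ) : (p * a * p * (p * a * p)).trace = (a * p * a * p).trace := by
  rw [show p * a * p * (p * a * p) = p * (a * p * a * p) by
      simp only [mul_assoc, ← mul_assoc p p, hp.eq], trace_mul_comm]
  simp only [mul_assoc, hp.eq]

/-- The block-diagonal part `ϵ(a)` of the paper. -/
def pinching {ι : Type*} [Fintype ι] (P : ι → Matrix n n ℂ) (a : Matrix n n ℂ) :
    Matrix n n ℂ :=
  ∑ i, P i * a * P i

section Pinching

variable {ι : Type*} [Fintype ι] {P : ι → Matrix n n ℂ}

theorem pinching_mul_proj (hPi : ∀ i, P i * P i = P i)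
    (hPo : Pairwise fun i j => P i * P j = 0) (a : Matrix n n ℂ) (i : ι) :
    pinching P a * P i = P i * a * P i := by
  rw [pinching, Finset.sum_mul, Finset.sum_eq_single i]
  · rw [mul_assoc, hPi]
  · exact fun j _ hj => by rw [mul_assoc, hPo hj, mul_zero]
  · simp

theorem proj_mul_pinching (hPi : ∀ i, P i * P i = P i)
    (hPo : Pairwise fun i j => P i * P j = 0) (a : Matrix n n ℂ) (i : ι) :
    P i * pinching P a = P i * a * P i := by
  rw [pinching, Finset.mul_sum, Finset.sum_eq_single i]
  · rw [← mul_assoc, ← mul_assoc, hPi]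
  · exact fun j _ hj => by rw [← mul_assoc, ← mul_assoc, hPo hj.symm, zero_mul, zero_mul]
  · simp

theorem PosSemidef.pinching {a : Matrix n n ℂ} (ha : a.PosSemidef)
    (hPh : ∀ i, (P i).IsHermitian) : (pinching P a).PosSemidef :=
  posSemidef_sum _ fun i _ => by simpa [(hPh i).eq] using ha.conjTranspose_mul_mul_same (P i)

theorem mul_pinching_sub_mul_proj (hPi : ∀ i, P i * P i = P i)
    (hPo : Pairwise fun i j => P i * P j = 0) (h : Matrix n n ℂ) (i : ι) :
    (h * pinching P h - h * P i * h) * P i = 0 := by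
  rw [sub_mul, mul_assoc h, pinching_mul_proj hPi hPo]
  simp only [mul_assoc, sub_self]

end Pinching

variable [DecidableEq n]

open scoped MatrixOrder in
theorem PosSemidef.re_trace_mul_nonneg {A B : Matrix n n ℂ} (hA : A.PosSemidef)
    (hB : B.PosSemidef) : 0 ≤ (A * B).trace.re := by
  obtain ⟨X, rfl⟩ := CStarAlgebra.nonneg_iff_eq_star_mul_self.mp hA.nonneg
  rw [star_eq_conjTranspose, mul_assoc, trace_mul_comm]
  exact (Complex.nonneg_iff.mp (hB.mul_mul_conjTranspose_same X).trace_nonneg).1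

theorem exists_common_eigenvector {A B : Matrix n n ℂ} (hAB : Commute A B) {μ : ℂ}
    {v : n → ℂ} (hv : v ≠ 0) (hBv : B *ᵥ v = μ • v) :
    ∃ (s : ℂ) (w : n → ℂ), w ≠ 0 ∧ A *ᵥ w = s • w ∧ B *ᵥ w = μ • w := by
  set W := Module.End.eigenspace (toLinAlgEquiv' B) μ
  have hvW : v ∈ W := by simpa [W, Module.End.mem_eigenspace_iff] using hBv
  have : Nontrivial W := ⟨⟨⟨v, hvW⟩, 0, by simpa using hv⟩⟩
  have hmaps : Set.MapsTo (toLinAlgEquiv' A) W W :=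
    Module.End.mapsTo_genEigenspace_of_comm (hAB.symm.map toLinAlgEquiv') μ 1
  obtain ⟨s, hs⟩ := Module.End.exists_eigenvalue ((toLinAlgEquiv' A).restrict hmaps)
  obtain ⟨⟨w, hwW⟩, hw⟩ := hs.exists_hasEigenvector
  refine ⟨s, w, fun h => hw.2 (by simpa using h), congrArg Subtype.val hw.apply_eq_smul, ?_⟩
  simpa [W, Module.End.mem_eigenspace_iff] using hwW

theorem IsHermitian.posSemidef_of_commute {Q E : Matrix n n ℂ} (hQ : Q.IsHermitian)
    (hEQ : Commute E Q) (hE : ∀ (s : ℂ) (x : n → ℂ), E *ᵥ x = s • x → 0 ≤ star x ⬝ᵥ (Q *ᵥ x)) :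
    Q.PosSemidef := by
  rw [hQ.posSemidef_iff_eigenvalues_nonneg]
  intro k
  have hv : Q *ᵥ hQ.eigenvectorBasis k = (hQ.eigenvalues k : ℂ) • hQ.eigenvectorBasis k := by
    rw [hQ.mulVec_eigenvectorBasis, Complex.coe_smul]
  obtain ⟨s, w, hw, hEw, hQw⟩ := exists_common_eigenvector hEQ
    (by simpa using hQ.eigenvectorBasis.orthonormal.ne_zero k) hv
  have h := hE s w hEw
  rw [hQw, dotProduct_smul, smul_eq_mul] at h
  exact Complex.zero_le_real.mp
    (Complex.nonneg_of_mul_nonneg_left h (dotProduct_star_self_pos_iff.mpr hw))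

theorem posSemidef_mul_sub_mul_mul {h e P : Matrix n n ℂ} (hh : h.PosSemidef)
    (he : e.PosSemidef) (hP : P.IsHermitian) (hPe : P * e = P * h * P) (hhe : e * h = h * e) :
    (h * e - h * P * h).PosSemidef := by
  set Q := h * e - h * P * h
  set R := e - P * h
  have hQR : Q = h * R := by simp only [Q, R, mul_sub, mul_assoc]
  have hRH : Rᴴ = e - h * P := by
    simp only [R, conjTranspose_sub, conjTranspose_mul, he.isHermitian.eq, hh.isHermitian.eq,
      hP.eq]
  have hPhR : P * (h * R) = 0 := by
    simp only [R, mul_sub]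
    rw [← hhe, ← mul_assoc P e h, hPe]
    simp only [mul_assoc, sub_self]
  have hQH : Q.IsHermitian := by
    refine IsHermitian.sub ?_ ?_
    · rw [IsHermitian, conjTranspose_mul, he.isHermitian.eq, hh.isHermitian.eq, hhe]
    · rw [IsHermitian, conjTranspose_mul, conjTranspose_mul, hh.isHermitian.eq, hP.eq, mul_assoc]
  have heQ : e * Q = Rᴴ * h * R := by
    rw [hQR, hRH, sub_mul, sub_mul, ← mul_assoc]
    simp only [mul_assoc, hPhR, mul_zero, sub_zero]
  have hcomm : Commute e Q :=
    calc e * Q = Rᴴ * h * R := heQ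
      _ = (Rᴴ * h * R)ᴴ := (hh.conjTranspose_mul_mul_same R).isHermitian.eq.symm
      _ = Q * e := by rw [← heQ, conjTranspose_mul, hQH.eq, he.isHermitian.eq]
  refine hQH.posSemidef_of_commute hcomm fun s x hx => ?_
  rcases eq_or_ne x 0 with rfl | hx0
  · simp
  have hform : s * (star x ⬝ᵥ (Q *ᵥ x)) = star (R *ᵥ x) ⬝ᵥ (h *ᵥ (R *ᵥ x)) :=
    calc s * (star x ⬝ᵥ (Q *ᵥ x)) = star x ⬝ᵥ (Q *ᵥ (e *ᵥ x)) := by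
          rw [hx, mulVec_smul, dotProduct_smul, smul_eq_mul]
      _ = star x ⬝ᵥ ((Rᴴ * h * R) *ᵥ x) := by rw [mulVec_mulVec, ← hcomm.eq, heQ]
      _ = star (R *ᵥ x) ⬝ᵥ (h *ᵥ (R *ᵥ x)) := by
          rw [← mulVec_mulVec, ← mulVec_mulVec, dotProduct_mulVec, ← star_mulVec]
  rcases (he.nonneg_of_mulVec_eq_smul hx0 hx).lt_or_eq with hs | rfl
  · refine Complex.nonneg_of_mul_nonneg_left ?_ hs
    rw [mul_comm, hform]
    exact hh.dotProduct_mulVec_nonneg _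
  · rw [zero_mul, eq_comm, hh.dotProduct_mulVec_zero_iff] at hform
    rw [hQR, ← mulVec_mulVec, hform, dotProduct_zero]

theorem isGreatest_sum_re_trace_mul_of_slackness {ι : Type*} [Fintype ι]
    {A δ : ι → Matrix n n ℂ} {Λ : Matrix n n ℂ} (hΛ : ∀ i, (Λ - A i).PosSemidef)
    (hslack : ∀ i, (Λ - A i) * δ i = 0) (hδ : ∀ i, (δ i).PosSemidef) (hδsum : ∑ i, δ i = 1) :
    IsGreatest {t : ℝ | ∃ δ' : ι → Matrix n n ℂ,
        (∀ i, (δ' i).PosSemidef) ∧ ∑ i, δ' i = 1 ∧ t = ∑ i, ((A i * δ' i).trace).re}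
      (∑ i, ((A i * δ i).trace).re) := by
  have hsum : ∀ δ' : ι → Matrix n n ℂ, ∑ i, δ' i = 1 → ∑ i, ((Λ * δ' i).trace).re = Λ.trace.re :=
    fun δ' h => by rw [← Complex.re_sum, ← trace_sum, ← Finset.mul_sum, h, mul_one]
  have hvalue : ∑ i, ((A i * δ i).trace).re = Λ.trace.re := by
    rw [← hsum δ hδsum]
    congr! 3 with i
    rw [eq_comm, ← sub_eq_zero, ← sub_mul, hslack]
  refine ⟨⟨δ, hδ, hδsum, rfl⟩, ?_⟩
  rintro t ⟨δ', hδ', hδ'sum, rfl⟩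
  rw [hvalue, ← hsum δ' hδ'sum]
  refine Finset.sum_le_sum fun i _ => ?_
  have := (hΛ i).re_trace_mul_nonneg (hδ' i)
  rw [sub_mul, trace_sub, Complex.sub_re] at this
  linarith

section Pinching

variable {ι : Type*} [Fintype ι] {P : ι → Matrix n n ℂ}

theorem posSemidef_mul_pinching_sub {h : Matrix n n ℂ} (hh : h.PosSemidef)
    (hPh : ∀ i, (P i).IsHermitian) (hPi : ∀ i, P i * P i = P i)
    (hPo : Pairwise fun i j => P i * P j = 0) (hcomm : pinching P h * h = h * pinching P h)
    (i : ι) : (h * pinching P h - h * P i * h).PosSemidef :=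
  posSemidef_mul_sub_mul_mul hh (hh.pinching hPh) (hPh i) (proj_mul_pinching hPi hPo h i) hcomm

theorem isGreatest_pinching {h : Matrix n n ℂ} (hh : h.PosSemidef)
    (hPh : ∀ i, (P i).IsHermitian) (hPi : ∀ i, P i * P i = P i)
    (hPo : Pairwise fun i j => P i * P j = 0) (hPsum : ∑ i, P i = 1)
    (hcomm : pinching P h * h = h * pinching P h) :
    IsGreatest {t : ℝ | ∃ δ : ι → Matrix n n ℂ,
        (∀ i, (δ i).PosSemidef) ∧ ∑ i, δ i = 1 ∧ t = ∑ i, ((h * P i * h * δ i).trace).re}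
      (∑ i, ((P i * h * P i * (P i * h * P i)).trace).re) := by
  simp only [trace_mul_mul_sq_of_isIdempotentElem (hPi _)]
  refine isGreatest_sum_re_trace_mul_of_slackness
    (posSemidef_mul_pinching_sub hh hPh hPi hPo hcomm) (mul_pinching_sub_mul_proj hPi hPo h)
    (fun i => ?_) hPsum
  simpa [(hPh i).eq, hPi] using posSemidef_conjTranspose_mul_self (P i)

end Pinching

theorem pinching_single_of_diag_eq {h : Matrix n n ℂ} {a : ℂ} (hdiag : ∀ i, h i i = a) :
    pinching (fun i => single i i 1) h = a • 1 := by
  simp [pinching, hdiag, sum_single_eq_diagonal, smul_one_eq_diagonal]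

theorem isGreatest_single_of_diag_eq {h : Matrix n n ℂ} (hh : h.PosSemidef) {a : ℝ}
    (hdiag : ∀ i, h i i = a) :
    IsGreatest {t : ℝ | ∃ δ : n → Matrix n n ℂ,
        (∀ i, (δ i).PosSemidef) ∧ ∑ i, δ i = 1 ∧ t = ∑ i, ((h * single i i 1 * h * δ i).trace).re}
      (Fintype.card n * a ^ 2) := by
  have hpinch := pinching_single_of_diag_eq hdiag
  convert isGreatest_pinching hh (fun i => by simp [IsHermitian]) (fun i => by simp)
    (fun i j hij => single_mul_single_of_ne 1 i i j hij 1) sum_single_one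
    (by rw [hpinch, smul_mul, Matrix.mul_smul, one_mul, mul_one]) using 1
  simp [hdiag, sq]

end Matrix

theorem optimal_identification_equidiagonal_general {N m : ℕ}
    {V : Type*} [NormedAddCommGroup V] [InnerProductSpace ℂ V]
    (P : Fin m → Matrix (Fin N) (Fin N) ℂ)
    (hPh : ∀ i, (P i).IsHermitian) (hPi : ∀ i, P i * P i = P i)
    (hPo : ∀ i j, i ≠ j → P i * P j = 0) (hPsum : ∑ i, P i = 1)
    (h : Matrix (Fin N) (Fin N) ℂ)
    (hh : h.PosSemidef)
    (hcomm : (∑ i, P i * h * P i) * h = h * (∑ i, P i * h * P i)) :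
    (∃ lam : Matrix (Fin N) (Fin N) ℂ,
      lam * lam = h * ((∑ i, P i * h * P i) * (∑ i, P i * h * P i)) * h ∧
      (∀ i, (lam - h * P i * h).PosSemidef) ∧
      (∀ i, (lam - h * P i * h) * P i = 0)) ∧
    IsGreatest {t : ℝ | ∃ δ : Fin m → Matrix (Fin N) (Fin N) ℂ,
        (∀ i, (δ i).PosSemidef) ∧ ∑ i, δ i = 1 ∧
        t = ∑ i, ((h * P i * h * δ i).trace).re}
      (∑ i, ((P i * h * P i * (P i * h * P i)).trace).re) ∧
    (∀ (m' : ℕ) (ψ : Fin m' → V) (σ' h' : Matrix (Fin m') (Fin m') ℂ) (a : ℝ),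
      (∀ i j, σ' i j = (inner ℂ (ψ i) (ψ j) : ℂ)) →
      h'.PosSemidef → h' * h' = σ' → (∀ i, h' i i = (a : ℂ)) →
      (IsGreatest {t : ℝ | ∃ δ : Fin m' → Matrix (Fin m') (Fin m') ℂ,
          (∀ i, (δ i).PosSemidef) ∧ ∑ i, δ i = 1 ∧
          t = ∑ i, ((h' * Matrix.single i i 1 * h' * δ i).trace).re}
        ((m' : ℝ) * a ^ 2) ∧
        (m' : ℝ) * a ^ 2 = ((h'.trace).re) ^ 2 / (m' : ℝ))) := by
  have hPo' : Pairwise fun i j => P i * P j = 0 := fun i j => hPo i j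
  refine ⟨⟨h * ∑ i, P i * h * P i, ?_, posSemidef_mul_pinching_sub hh hPh hPi hPo' hcomm,
      mul_pinching_sub_mul_proj hPi hPo' h⟩, isGreatest_pinching hh hPh hPi hPo' hPsum hcomm,
    fun m' _ _ h' a _ hh' _ hdiag => ⟨by simpa using isGreatest_single_of_diag_eq hh' hdiag, ?_⟩⟩
  · rw [mul_assoc h, ← hcomm]
    simp only [mul_assoc]
  · rw [show h'.trace.re = m' * a by simp [trace, hdiag]]
    rcases eq_or_ne (m' : ℝ) 0 with hm | hm
    · simp [hm]
    · field_simp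

/-- The equidiagonal (commutative) case of optimal identification: if the block-diagonal
part `ϵ(h) = ∑ᵢ Pᵢ h Pᵢ` of `h = σ^{1/2}` commutes with `h`, then the optimality
conditions are satisfied with `μᵢ = (hᵢᵢ)²` (i.e. `λ λ = h ϵ(h)² h`), the optimal
decision operators in signal space are `δᵢ = 1ᵢ = Pᵢ`, and the quality of optimal
identification is `∑ᵢ Tr (hᵢᵢ)²`.  In particular, for `m'` pure patterns `ψᵢ` whose Gram
matrix `σ'` has a square root `h'` with constant diagonal `h'ᵢᵢ = a`, the maximal
intensity of optimally separated signals is `m' a² = (Tr σ'^{1/2})² / m'`. -/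
theorem optimal_identification_equidiagonal {N m : ℕ}
    {V : Type*} [NormedAddCommGroup V] [InnerProductSpace ℂ V]
    (P : Fin m → Matrix (Fin N) (Fin N) ℂ)
    (hPh : ∀ i, (P i).IsHermitian) (hPi : ∀ i, P i * P i = P i)
    (hPo : ∀ i j, i ≠ j → P i * P j = 0) (hPsum : ∑ i, P i = 1)
    (σ h : Matrix (Fin N) (Fin N) ℂ) (hσ : σ.PosSemidef)
    (hh : h.PosSemidef) (hh2 : h * h = σ)
    (hcomm : (∑ i, P i * h * P i) * h = h * (∑ i, P i * h * P i)) :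
    (∃ lam : Matrix (Fin N) (Fin N) ℂ,
      lam * lam = h * ((∑ i, P i * h * P i) * (∑ i, P i * h * P i)) * h ∧
      (∀ i, (lam - h * P i * h).PosSemidef) ∧
      (∀ i, (lam - h * P i * h) * P i = 0)) ∧
    IsGreatest {t : ℝ | ∃ δ : Fin m → Matrix (Fin N) (Fin N) ℂ,
        (∀ i, (δ i).PosSemidef) ∧ ∑ i, δ i = 1 ∧
        t = ∑ i, ((h * P i * h * δ i).trace).re}
      (∑ i, ((P i * h * P i * (P i * h * P i)).trace).re) ∧
    (∀ (m' : ℕ) (ψ : Fin m' → V) (σ' h' : Matrix (Fin m') (Fin m') ℂ) (a : ℝ),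
      (∀ i j, σ' i j = (inner ℂ (ψ i) (ψ j) : ℂ)) →
      h'.PosSemidef → h' * h' = σ' → (∀ i, h' i i = (a : ℂ)) →
      (IsGreatest {t : ℝ | ∃ δ : Fin m' → Matrix (Fin m') (Fin m') ℂ,
          (∀ i, (δ i).PosSemidef) ∧ ∑ i, δ i = 1 ∧
          t = ∑ i, ((h' * Matrix.single i i 1 * h' * δ i).trace).re}
        ((m' : ℝ) * a ^ 2) ∧
        (m' : ℝ) * a ^ 2 = ((h'.trace).re) ^ 2 / (m' : ℝ))) :=
  optimal_identification_equidiagonal_general P hPh hPi hPo hPsum h hh hcomm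
end

section
/- Let θ ↦ S_θ be a differentiable family of positive semidefinite Hermitian operators on a finite-dimensional complex inner product space H with derivative S_θ′, let J_θ = Tr(S_θ) > 0, and let ĝ_θ be a Hermitian operator solving the symmetric logarithmic derivative equation ĝ_θS_θ + S_θĝ_θ = 2S_θ′. Set γ_θ = Tr(S_θĝ_θ)/J_θ. If x̂ is a Hermitian operator satisfying the unbiasedness condition Tr(S_θx̂) = θJ_θ for all θ in a neighborhood of the given point, then Tr[S_θ(x̂ − θ)²] · Tr[S_θ(ĝ_θ − γ_θ)²] ≥ J_θ²; equivalently, the variance σ_x² = Tr[S_θ(x̂ − θ)²]/J_θ of the unbiased observable is bounded below by the inverse variance of the logarithmic derivative: σ_x² ≥ 1/σ_ĝ², where σ_ĝ² = Tr[S_θ(ĝ_θ − γ_θ)²]/J_θ. -/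
open Matrix
open scoped ComplexOrder

/-!
Differentiating the unbiasedness condition gives `Tr (S' x) = J + θ₀ Tr S'`, and the
symmetric logarithmic derivative equation turns `Tr (S' x)` into `⟨x | g⟩₊`. Together they give
`⟨x − θ₀ | g − γ⟩₊ = J`, where the centring `γ` drops out because `Tr (S (x − θ₀)) = 0`.
The bound is then Cauchy–Schwarz for the positive semidefinite form `⟨· | ·⟩₊`.
-/

namespace Matrix

variable {ι 𝕜 : Type*} [Fintype ι] [RCLike 𝕜]

/-- For Hermitian `S`, `A`, `B` this is the symmetrized covariance
`⟨A | B⟩₊ = ½ Tr [S (A B + B A)]`. -/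
def symmCov (S A B : Matrix ι ι 𝕜) : ℝ := RCLike.re (S * A * B).trace

theorem symmCov_sq_le {S A B : Matrix ι ι 𝕜} (hS : S.PosSemidef) (hA : A.IsHermitian)
    (hB : B.IsHermitian) : symmCov S A B ^ 2 ≤ symmCov S A A * symmCov S B B := by
  let _ := S.toMatrixSeminormedAddCommGroup hS
  let _ := S.toMatrixInnerProductSpace hS
  let _ := InnerProductSpace.rclikeToReal 𝕜 (Matrix ι ι 𝕜)
  have symmCov_eq_inner {C : Matrix ι ι 𝕜} (hC : C.IsHermitian) (D : Matrix ι ι 𝕜) :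
      symmCov S C D = inner ℝ C D := by
    change _ = RCLike.re (D * S * Cᴴ).trace
    rw [symmCov, hC.eq, trace_mul_cycle S C D]
  rw [symmCov_eq_inner hA, symmCov_eq_inner hA, symmCov_eq_inner hB, sq]
  exact real_inner_mul_inner_self_le A B

theorem symmCov_sub_smul_one [DecidableEq ι] (S A B : Matrix ι ι 𝕜) (a b : ℝ) :
    symmCov S (A - a • 1) (B - b • 1) =
      symmCov S A B - b * RCLike.re (S * A).trace - a * symmCov S 1 B
        + a * b * RCLike.re S.trace := by
  simp only [symmCov, mul_sub, sub_mul, mul_smul_comm, smul_mul_assoc, mul_one, trace_sub,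
    trace_smul, map_sub, RCLike.smul_re]
  ring

theorem symmCov_eq_re_trace_of_sld {S S' g : Matrix ι ι 𝕜} (hS : S.IsHermitian)
    (hg : g.IsHermitian) (hSLD : g * S + S * g = (2 : 𝕜) • S') {x : Matrix ι ι 𝕜}
    (hx : x.IsHermitian) : symmCov S x g = RCLike.re (S' * x).trace := by
  have hcycle : (g * S * x).trace = (S * x * g).trace := (trace_mul_cycle S x g).symm
  have hadjoint : (S * g * x).trace = star (S * x * g).trace := by
    rw [← trace_mul_cycle x g S, ← trace_conjTranspose, conjTranspose_mul, conjTranspose_mul,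
      hS.eq, hg.eq, hx.eq, Matrix.mul_assoc]
  have h := congr_arg (fun M => RCLike.re (M * x).trace) hSLD
  simp only [add_mul, smul_mul_assoc, trace_add, trace_smul, map_add, smul_eq_mul, hcycle,
    hadjoint, RCLike.star_def, RCLike.conj_re, RCLike.ofNat_mul_re] at h
  rw [symmCov]
  linarith

theorem hasDerivAt_trace {S : ℝ → Matrix ι ι 𝕜} {S' : Matrix ι ι 𝕜} {θ : ℝ}
    (hS : ∀ i j, HasDerivAt (fun t => S t i j) (S' i j) θ) :
    HasDerivAt (fun t => (S t).trace) S'.trace θ :=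
  HasDerivAt.fun_sum fun i _ => hS i i

theorem hasDerivAt_mul_const_apply {S : ℝ → Matrix ι ι 𝕜} {S' : Matrix ι ι 𝕜} {θ : ℝ}
    (hS : ∀ i j, HasDerivAt (fun t => S t i j) (S' i j) θ) (x : Matrix ι ι 𝕜) (i j : ι) :
    HasDerivAt (fun t => (S t * x) i j) ((S' * x) i j) θ :=
  HasDerivAt.fun_sum fun k _ => (hS i k).mul_const (x k j)

theorem trace_mul_eq_of_unbiased {S : ℝ → Matrix ι ι 𝕜} {S' : Matrix ι ι 𝕜} {θ₀ : ℝ}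
    (hS : ∀ i j, HasDerivAt (fun t => S t i j) (S' i j) θ₀) {x : Matrix ι ι 𝕜}
    (hx : ∀ᶠ θ in nhds θ₀, (S θ * x).trace = (θ : 𝕜) * (S θ).trace) :
    (S' * x).trace = (S θ₀).trace + θ₀ * S'.trace := by
  have hrhs : HasDerivAt (fun t : ℝ => (t : 𝕜) * (S t).trace)
      ((S θ₀).trace + θ₀ * S'.trace) θ₀ := by
    simpa [RCLike.real_smul_eq_coe_mul, add_comm] using
      (hasDerivAt_id' θ₀).fun_smul (hasDerivAt_trace hS)
  exact (hasDerivAt_trace (hasDerivAt_mul_const_apply hS x)).unique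
    (hrhs.congr_of_eventuallyEq hx)

end Matrix

theorem symmetric_rao_cramer_general {n : ℕ}
    (S S' : ℝ → Matrix (Fin n) (Fin n) ℂ) (θ₀ : ℝ)
    (hS : ∀ θ, (S θ).PosSemidef)
    (hderiv : ∀ θ, ∀ i j, HasDerivAt (fun t => S t i j) (S' θ i j) θ)
    (g : Matrix (Fin n) (Fin n) ℂ) (hg : g.IsHermitian)
    (hSLD : g * S θ₀ + S θ₀ * g = (2 : ℂ) • S' θ₀)
    (x : Matrix (Fin n) (Fin n) ℂ) (hx : x.IsHermitian)
    (hunbiased : ∀ᶠ θ in nhds θ₀, (S θ * x).trace = (θ : ℂ) * (S θ).trace) :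
    (((S θ₀).trace).re) ^ 2 ≤
      ((S θ₀ * (x - (θ₀ : ℂ) • 1) * (x - (θ₀ : ℂ) • 1)).trace).re *
        ((S θ₀ * (g - ((((S θ₀ * g).trace).re / ((S θ₀).trace).re : ℝ) : ℂ) • 1) *
          (g - ((((S θ₀ * g).trace).re / ((S θ₀).trace).re : ℝ) : ℂ) • 1)).trace).re := by
  set γ : ℝ := ((S θ₀ * g).trace).re / ((S θ₀).trace).re
  simp only [Complex.coe_smul]
  have hcov : symmCov (S θ₀) (x - θ₀ • 1) (g - γ • 1) = ((S θ₀).trace).re := by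
    have hxg := symmCov_eq_re_trace_of_sld (hS θ₀).isHermitian hg hSLD hx
    have h1g := symmCov_eq_re_trace_of_sld (hS θ₀).isHermitian hg hSLD isHermitian_one
    rw [symmCov_sub_smul_one, hxg, h1g, hunbiased.self_of_nhds,
      trace_mul_eq_of_unbiased (hderiv θ₀) hunbiased]
    simp only [map_add, RCLike.re_ofReal_mul, RCLike.re_to_complex, Complex.re_ofReal_mul,
      mul_one]
    ring
  rw [← hcov]
  exact symmCov_sq_le (hS θ₀) (hx.sub (isHermitian_one.smul (.all _)))
    (hg.sub (isHermitian_one.smul (.all _)))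

/-- Noncommutative (symmetric) Rao–Cramér bound (3.1.9).  `S` is a differentiable family
of positive semidefinite operators with entrywise derivative `S'`, `g` is a Hermitian
solution of the symmetric logarithmic derivative equation `g S + S g = 2 S'` at `θ₀`, and
`x` is a Hermitian operator unbiased for `θ` near `θ₀`: `Tr (S_θ x) = θ J_θ`.  Then
`Tr [S (x − θ₀)²] · Tr [S (g − γ)²] ≥ J²` at `θ₀`, where `γ = Tr (S g)/J`. -/
theorem symmetric_rao_cramer {n : ℕ}
    (S S' : ℝ → Matrix (Fin n) (Fin n) ℂ) (θ₀ : ℝ)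
    (hS : ∀ θ, (S θ).PosSemidef)
    (hderiv : ∀ θ, ∀ i j, HasDerivAt (fun t => S t i j) (S' θ i j) θ)
    (hJ : 0 < ((S θ₀).trace).re)
    (g : Matrix (Fin n) (Fin n) ℂ) (hg : g.IsHermitian)
    (hSLD : g * S θ₀ + S θ₀ * g = (2 : ℂ) • S' θ₀)
    (x : Matrix (Fin n) (Fin n) ℂ) (hx : x.IsHermitian)
    (hunbiased : ∀ᶠ θ in nhds θ₀, (S θ * x).trace = (θ : ℂ) * (S θ).trace) :
    (((S θ₀).trace).re) ^ 2 ≤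
      ((S θ₀ * (x - (θ₀ : ℂ) • 1) * (x - (θ₀ : ℂ) • 1)).trace).re *
        ((S θ₀ * (g - ((((S θ₀ * g).trace).re / ((S θ₀).trace).re : ℝ) : ℂ) • 1) *
          (g - ((((S θ₀ * g).trace).re / ((S θ₀).trace).re : ℝ) : ℂ) • 1)).trace).re :=
  symmetric_rao_cramer_general S S' θ₀ hS hderiv g hg hSLD x hx hunbiased
end
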